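/- arXiv:2309.01514 — 4 statements merged into one kernel-verified Lean document; each statement's English description precedes it below -/
import Mathlib

section
/- Assume (A0), (K1), and that sup_{t≥0} ∫_{t−σ_j(t)}^t p(s) ds < ∞ for every j = 1,…,m. Let x be a positive solution of equation (*) and set l = liminf_{t→∞} x(t), L = limsup_{t→∞} x(t). If 0 < l < L < ∞, then l < K < L. -/
open Real Filter MeasureTheory Set

noncomputable section

/-- A positive (admissible) solution of the nonautonomous Nicholson equation (*)
`x'(t) = ∑ j, p j t * x (t - τd j t) * exp (-(a j t * x (t - σd j t))) - δ t * x t`,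
considered for `t ≥ 0`, with nonnegative continuous initial data on `[-τ, 0)` and `x 0 > 0`. -/
def IsPosSol (m : ℕ) (p a : Fin m → ℝ → ℝ) (δ : ℝ → ℝ)
    (τd σd : Fin m → ℝ → ℝ) (τ : ℝ) (x : ℝ → ℝ) : Prop :=
  ContinuousOn x (Ici (-τ)) ∧
  (∀ θ ∈ Ico (-τ) (0:ℝ), 0 ≤ x θ) ∧ 0 < x 0 ∧
  ∀ t ≥ (0:ℝ), HasDerivWithinAt x
      ((∑ j, p j t * x (t - τd j t) * Real.exp (-(a j t * x (t - σd j t)))) - δ t * x t)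
      (Ici 0) t

/-- Hypothesis (A0): the coefficients `p j, a j, δ` are continuous and positive on `[0,∞)`;
the delays `τd j, σd j` are continuous, nonnegative and bounded; and each `a j` is bounded
below and above by positive constants. -/
def HypA0 (m : ℕ) (p a : Fin m → ℝ → ℝ) (δ : ℝ → ℝ)
    (τd σd : Fin m → ℝ → ℝ) : Prop :=
  (∀ j, ContinuousOn (p j) (Ici 0) ∧ ∀ t ≥ (0:ℝ), 0 < p j t) ∧
  (∀ j, ContinuousOn (a j) (Ici 0) ∧
      ∃ c C : ℝ, 0 < c ∧ ∀ t ≥ (0:ℝ), c ≤ a j t ∧ a j t ≤ C) ∧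
  (ContinuousOn δ (Ici 0) ∧ ∀ t ≥ (0:ℝ), 0 < δ t) ∧
  (∀ j, ContinuousOn (τd j) (Ici 0) ∧ ContinuousOn (σd j) (Ici 0) ∧
      (∀ t ≥ (0:ℝ), 0 ≤ τd j t ∧ 0 ≤ σd j t) ∧
      ∃ B : ℝ, ∀ t ≥ (0:ℝ), τd j t ≤ B ∧ σd j t ≤ B)

/-- `τ = max_j max (sup_t τd j t, sup_t σd j t)`: the supremum of all the delays. -/
def IsMaxDelay (m : ℕ) (τd σd : Fin m → ℝ → ℝ) (τ : ℝ) : Prop :=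
  IsLUB {r : ℝ | ∃ j : Fin m, ∃ t : ℝ, 0 ≤ t ∧ (r = τd j t ∨ r = σd j t)} τ

/-- Hypothesis (A1): `liminf_{t→∞} p(t)/δ(t) > 1` and `limsup_{t→∞} p(t)/δ(t) < ∞`. -/
def HypA1 (m : ℕ) (p : Fin m → ℝ → ℝ) (δ : ℝ → ℝ) : Prop :=
  1 < Filter.liminf (fun t => (∑ j, p j t) / δ t) Filter.atTop ∧
  Filter.IsBoundedUnder (· ≤ ·) Filter.atTop (fun t => (∑ j, p j t) / δ t)

/-- Hypothesis (A2): `limsup_{t→∞} ∫_{t-τ}^t p(s) ds < ∞`. -/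
def HypA2 (m : ℕ) (p : Fin m → ℝ → ℝ) (τ : ℝ) : Prop :=
  Filter.IsBoundedUnder (· ≤ ·) Filter.atTop (fun t => ∫ s in t - τ..t, (∑ j, p j s))

/-- Hypothesis (A3): `∫_0^∞ δ(s) ds = ∞`. -/
def HypA3 (δ : ℝ → ℝ) : Prop :=
  Filter.Tendsto (fun t => ∫ s in (0:ℝ)..t, δ s) Filter.atTop Filter.atTop

private lemma exp_neg_two_mul_le {β : ℝ} (h0 : 0 ≤ β) (h2 : β ≤ 1/2) :
    Real.exp (-(2*β)) ≤ 1 - β := by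
  have h1 : 2*β + 1 ≤ Real.exp (2*β) := Real.add_one_le_exp _
  have h3 : Real.exp (-(2*β)) * Real.exp (2*β) = 1 := by
    rw [← Real.exp_add]; simp
  nlinarith [Real.exp_pos (-(2*β)), Real.exp_pos (2*β)]

set_option maxHeartbeats 4000000 in
/-- Under (A0), (K1) and `sup_{t≥0} ∫_{t-σ_j(t)}^t p(s) ds < ∞` for every `j`,
if a positive solution `x` of (*) satisfies `0 < l < L < ∞` for `l = liminf x`, `L = limsup x`,
then `l < K < L`. -/
theorem oscillating_solutions_straddle_equilibrium
    (m : ℕ) (hm : 0 < m) (p a : Fin m → ℝ → ℝ) (δ : ℝ → ℝ)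
    (τd σd : Fin m → ℝ → ℝ) (τ : ℝ)
    (hA0 : HypA0 m p a δ τd σd) (hτ : IsMaxDelay m τd σd τ)
    (K : ℝ) (hKpos : 0 < K)
    (hK1 : ∀ t ≥ (0:ℝ), δ t = ∑ j, p j t * Real.exp (-(a j t * K)))
    (hsup : ∀ j : Fin m, ∃ B : ℝ, ∀ t ≥ (0:ℝ),
      (∫ s in (t - σd j t)..t, (∑ k, p k s)) ≤ B)
    (x : ℝ → ℝ) (hx : IsPosSol m p a δ τd σd τ x)
    (l L : ℝ)
    (hl : l = Filter.liminf x Filter.atTop) (hL : L = Filter.limsup x Filter.atTop)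
    (hbdd : Filter.IsBoundedUnder (· ≤ ·) Filter.atTop x)
    (hlpos : 0 < l) (hlL : l < L) :
    l < K ∧ K < L := by
  obtain ⟨contx, -, -, hderiv⟩ := hx
  obtain ⟨hp, ha, hδc, hdel⟩ := hA0
  haveI : Nonempty (Fin m) := ⟨⟨0, hm⟩⟩
  have hL0 : 0 < L := lt_trans hlpos hlL
  -- constants c C bounding a
  choose ca Ca hca using fun j => (ha j).2
  set c : ℝ := Finset.univ.inf' Finset.univ_nonempty ca with hcdef
  set C : ℝ := Finset.univ.sup' Finset.univ_nonempty Ca with hCdef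
  have hc_pos : 0 < c := by
    rw [hcdef, Finset.lt_inf'_iff]
    exact fun j _ => (hca j).1
  have hcle : ∀ (j : Fin m) (t : ℝ), 0 ≤ t → c ≤ a j t := by
    intro j t ht
    exact le_trans (Finset.inf'_le _ (Finset.mem_univ j)) (((hca j).2 t ht).1)
  have hCge : ∀ (j : Fin m) (t : ℝ), 0 ≤ t → a j t ≤ C := by
    intro j t ht
    exact le_trans (((hca j).2 t ht).2) (Finset.le_sup' _ (Finset.mem_univ j))
  have hC_pos : 0 < C := lt_of_lt_of_le hc_pos
    (le_trans (hcle ⟨0, hm⟩ 0 le_rfl) (hCge ⟨0, hm⟩ 0 le_rfl))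
  -- constant B bounding the δ-length of the σ-delay windows
  choose Bj hBj using hsup
  set B : ℝ := max 0 (Finset.univ.sup' Finset.univ_nonempty Bj) with hBdef
  have hB0 : 0 ≤ B := le_max_left _ _
  have hBle : ∀ (j : Fin m) (t : ℝ), 0 ≤ t →
      (∫ s in (t - σd j t)..t, (∑ k, p k s)) ≤ B := by
    intro j t ht
    exact le_trans (hBj j t ht)
      (le_trans (Finset.le_sup' _ (Finset.mem_univ j)) (le_max_right _ _))
  -- delay bounds
  have hτub : ∀ (j : Fin m) (t : ℝ), 0 ≤ t → τd j t ≤ τ ∧ σd j t ≤ τ := by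
    intro j t ht
    exact ⟨hτ.1 ⟨j, t, ht, Or.inl rfl⟩, hτ.1 ⟨j, t, ht, Or.inr rfl⟩⟩
  have hτ0 : 0 ≤ τ :=
    le_trans (((hdel ⟨0, hm⟩).2.2.1 0 le_rfl).1) (hτub ⟨0, hm⟩ 0 le_rfl).1
  -- lower boundedness of x at infinity
  have hSne : {b : ℝ | ∀ᶠ t in atTop, b ≤ x t}.Nonempty := by
    by_contra h
    rw [not_nonempty_iff_eq_empty] at h
    have : l = 0 := by rw [hl, liminf_eq, h, Real.sSup_empty]
    linarith
  obtain ⟨b₀, hb₀⟩ := hSne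
  have hxlb : IsBoundedUnder (· ≥ ·) atTop x := ⟨b₀, eventually_map.2 hb₀⟩
  -- eventual bounds
  have hev : ∀ ε : ℝ, 0 < ε → ∃ T₀ : ℝ, 0 ≤ T₀ ∧ ∀ t, T₀ ≤ t → l - ε < x t ∧ x t < L + ε := by
    intro ε hε
    have h1 : ∀ᶠ t in atTop, l - ε < x t :=
      eventually_lt_of_lt_liminf (by rw [← hl] at *; linarith) hxlb
    have h2 : ∀ᶠ t in atTop, x t < L + ε :=
      eventually_lt_of_limsup_lt (by rw [← hL]; linarith) hbdd
    obtain ⟨T, hT⟩ := eventually_atTop.mp (h1.and h2)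
    exact ⟨max T 0, le_max_right _ _,
      fun t ht => hT t (le_trans (le_max_left _ _) ht)⟩
  -- the right-hand side f
  set f : ℝ → ℝ :=
    fun t => ∑ j, p j t * x (t - τd j t) * Real.exp (-(a j t * x (t - σd j t))) with hfdef
  have hfderiv : ∀ t : ℝ, 0 < t → HasDerivAt x (f t - δ t * x t) t := by
    intro t ht
    exact (hderiv t ht.le).hasDerivAt (Ici_mem_nhds ht)
  have hxc0 : ContinuousOn x (Ici 0) :=
    contx.mono (Ici_subset_Ici.mpr (by linarith))
  have hxτc : ∀ j : Fin m, ContinuousOn (fun u => x (u - τd j u)) (Ici 0) := by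
    intro j
    exact contx.comp (continuousOn_id.sub (hdel j).1)
      (fun u hu => by
        have h1 := (hτub j u hu).1
        simp only [mem_Ici, id_eq] at *
        linarith)
  have hxσc : ∀ j : Fin m, ContinuousOn (fun u => x (u - σd j u)) (Ici 0) := by
    intro j
    exact contx.comp (continuousOn_id.sub (hdel j).2.1)
      (fun u hu => by
        have h1 := (hτub j u hu).2
        simp only [mem_Ici, id_eq] at *
        linarith)
  have hfc : ContinuousOn f (Ici 0) := by
    apply continuousOn_finset_sum
    intro j _
    exact ((hp j).1.mul (hxτc j)).mul (((ha j).1.mul (hxσc j)).neg.rexp)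
  -- extended δ and its primitive
  set δe : ℝ → ℝ := fun u => δ (max u 0) with hδedef
  have hδe_cont : Continuous δe :=
    hδc.1.comp_continuous (continuous_id.max continuous_const)
      (fun u => le_max_right u 0)
  have hδe_pos : ∀ u, 0 < δe u := fun u => hδc.2 _ (le_max_right u 0)
  have hδe_eq : ∀ t : ℝ, 0 ≤ t → δe t = δ t := by
    intro t ht
    simp only [hδedef, max_eq_left ht]
  set F : ℝ → ℝ := fun t => ∫ u in (1:ℝ)..t, δe u with hFdef
  have hFd : ∀ t, HasDerivAt F (δe t) t := by
    intro t
    exact intervalIntegral.integral_hasDerivAt_right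
      (hδe_cont.intervalIntegrable _ _)
      (hδe_cont.stronglyMeasurableAtFilter _ _) hδe_cont.continuousAt
  have hFc : Continuous F :=
    continuous_iff_continuousAt.mpr fun t => (hFd t).continuousAt
  have hFsub : ∀ r s : ℝ, F s - F r = ∫ u in r..s, δe u := by
    intro r s
    exact intervalIntegral.integral_interval_sub_left
      (hδe_cont.intervalIntegrable _ _) (hδe_cont.intervalIntegrable _ _)
  have hFmono : Monotone F := by
    intro r s hrs
    have h1 := hFsub r s
    have h2 := intervalIntegral.integral_nonneg (μ := volume) hrs (fun u _ => (hδe_pos u).le)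
    linarith
  set E : ℝ → ℝ := fun u => Real.exp (F u) with hEdef
  have hEpos : ∀ u, 0 < E u := fun u => Real.exp_pos _
  have hEc : Continuous E := Real.continuous_exp.comp hFc
  have hEmono : Monotone F → ∀ u v : ℝ, u ≤ v → E u ≤ E v := by
    intro _ u v huv
    exact Real.exp_le_exp.mpr (hFmono huv)
  have hEd : ∀ t, HasDerivAt E (δe t * E t) t := by
    intro t
    have := (hFd t).exp
    simpa [hEdef, mul_comm] using this
  have hVOCδ : ∀ r s : ℝ, ∫ u in r..s, δe u * E u = E s - E r := by
    intro r s
    exact intervalIntegral.integral_eq_sub_of_hasDerivAt (fun t _ => hEd t)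
      ((hδe_cont.mul hEc).intervalIntegrable _ _)
  have hVOC : ∀ r s : ℝ, 1 ≤ r → r ≤ s →
      ∫ u in r..s, f u * E u = x s * E s - x r * E r := by
    intro r s hr hrs
    apply intervalIntegral.integral_eq_sub_of_hasDerivAt (f := fun u => x u * E u)
    · intro t ht
      rw [uIcc_of_le hrs] at ht
      have ht0 : (0:ℝ) < t := lt_of_lt_of_le one_pos (le_trans hr ht.1)
      have h1 := (hfderiv t ht0).mul (hEd t)
      have h2 : (f t - δ t * x t) * E t + x t * (δe t * E t) = f t * E t := by
        rw [hδe_eq t ht0.le]; ring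
      rw [h2] at h1
      exact h1
    · apply ContinuousOn.intervalIntegrable
      apply ContinuousOn.mul _ hEc.continuousOn
      apply hfc.mono
      rw [uIcc_of_le hrs]
      intro u hu
      exact le_trans (le_trans one_pos.le hr) hu.1
  -- pointwise upper bound for f
  have hfub : ∀ (lo hi : ℝ) (u : ℝ), 0 ≤ hi → lo ≤ K → 0 ≤ u →
      (∀ j : Fin m, lo ≤ x (u - σd j u)) → (∀ j : Fin m, x (u - τd j u) ≤ hi) →
      f u ≤ hi * Real.exp (C * (K - lo)) * δe u := by
    intro lo hi u hhi hloK hu hσb hτb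
    rw [hδe_eq u hu, hK1 u hu, hfdef]
    simp only
    rw [Finset.mul_sum]
    apply Finset.sum_le_sum
    intro j _
    have hp0 : 0 < p j u := (hp j).2 u hu
    have haj1 : c ≤ a j u := hcle j u hu
    have haj2 : a j u ≤ C := hCge j u hu
    have h1 : Real.exp (-(a j u * x (u - σd j u))) ≤
        Real.exp (C * (K - lo)) * Real.exp (-(a j u * K)) := by
      rw [← Real.exp_add]
      apply Real.exp_le_exp.mpr
      rcases le_or_gt (x (u - σd j u)) K with h | h
      · -- a j u * (K - xσ) ≤ C * (K - lo)
        have h2 : a j u * (K - x (u - σd j u)) ≤ C * (K - x (u - σd j u)) :=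
          mul_le_mul_of_nonneg_right haj2 (by linarith)
        have h3 : C * (K - x (u - σd j u)) ≤ C * (K - lo) :=
          mul_le_mul_of_nonneg_left (by linarith [hσb j]) hC_pos.le
        nlinarith
      · have h2 : a j u * (K - x (u - σd j u)) ≤ 0 := by
          apply mul_nonpos_of_nonneg_of_nonpos (by linarith) (by linarith)
        have h3 : 0 ≤ C * (K - lo) := mul_nonneg hC_pos.le (by linarith)
        nlinarith
    calc p j u * x (u - τd j u) * Real.exp (-(a j u * x (u - σd j u)))
        ≤ p j u * (hi * (Real.exp (C * (K - lo)) * Real.exp (-(a j u * K)))) := by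
          rw [mul_assoc]
          apply mul_le_mul_of_nonneg_left _ hp0.le
          exact mul_le_mul (hτb j) h1 (Real.exp_pos _).le hhi
      _ = hi * Real.exp (C * (K - lo)) * (p j u * Real.exp (-(a j u * K))) := by ring
  -- pointwise lower bound for f
  have hflb : ∀ (lo hi : ℝ) (u : ℝ), 0 ≤ lo → K ≤ hi → 0 ≤ u →
      (∀ j : Fin m, x (u - σd j u) ≤ hi) → (∀ j : Fin m, lo ≤ x (u - τd j u)) →
      lo * Real.exp (-(C * (hi - K))) * δe u ≤ f u := by
    intro lo hi u hlo hhiK hu hσb hτb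
    rw [hδe_eq u hu, hK1 u hu, hfdef]
    simp only
    rw [Finset.mul_sum]
    apply Finset.sum_le_sum
    intro j _
    have hp0 : 0 < p j u := (hp j).2 u hu
    have haj1 : c ≤ a j u := hcle j u hu
    have haj2 : a j u ≤ C := hCge j u hu
    have h1 : Real.exp (-(C * (hi - K))) * Real.exp (-(a j u * K)) ≤
        Real.exp (-(a j u * x (u - σd j u))) := by
      rw [← Real.exp_add]
      apply Real.exp_le_exp.mpr
      have h2 : a j u * (K - x (u - σd j u)) ≥ a j u * (K - hi) :=
        mul_le_mul_of_nonneg_left (by linarith [hσb j]) (by linarith)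
      have h3 : a j u * (K - hi) ≥ C * (K - hi) := by
        apply mul_le_mul_of_nonpos_right haj2 (by linarith)
      nlinarith
    calc lo * Real.exp (-(C * (hi - K))) * (p j u * Real.exp (-(a j u * K)))
        = p j u * (lo * (Real.exp (-(C * (hi - K))) * Real.exp (-(a j u * K)))) := by ring
      _ ≤ p j u * (x (u - τd j u) * Real.exp (-(a j u * x (u - σd j u)))) := by
          apply mul_le_mul_of_nonneg_left _ hp0.le
          exact mul_le_mul (hτb j) h1 (mul_pos (Real.exp_pos _) (Real.exp_pos _)).le
            (le_trans hlo (hτb j))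
      _ = p j u * x (u - τd j u) * Real.exp (-(a j u * x (u - σd j u))) := by ring
  have hf0 : ∀ u : ℝ, 0 ≤ u → (∀ j : Fin m, 0 ≤ x (u - τd j u)) → 0 ≤ f u := by
    intro u hu hτb
    rw [hfdef]
    apply Finset.sum_nonneg
    intro j _
    exact mul_nonneg (mul_nonneg ((hp j).2 u hu).le (hτb j)) (Real.exp_pos _).le
  -- the clock F tends to infinity (else x converges, contradicting l < L)
  have hFtop : Tendsto F atTop atTop := by
    by_contra hnt
    have hbd : BddAbove (range F) := by
      by_contra hb
      exact hnt (tendsto_atTop_atTop_of_monotone' hFmono hb)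
    obtain ⟨T₀, hT₀0, hT₀⟩ := hev (l/2) (by linarith)
    set A : ℝ := (L + l/2) * Real.exp (C*K) with hAdef
    have hA0 : 0 < A := mul_pos (by linarith) (Real.exp_pos _)
    set η : ℝ := (L - l)/(4*A) with hηdef
    have hη : 0 < η := div_pos (by linarith) (by linarith)
    set S : ℝ := sSup (range F) with hSdef
    obtain ⟨yv, hyvmem, hyv⟩ := exists_lt_of_lt_csSup (range_nonempty F)
      (show S - η < S by linarith)
    obtain ⟨t₁, ht₁⟩ := hyvmem
    set s₀ : ℝ := max t₁ (T₀ + τ + 1) with hs₀def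
    have hs₀T : T₀ + τ + 1 ≤ s₀ := le_max_right _ _
    have hs₀1 : (1:ℝ) ≤ s₀ := by
      have := le_max_right t₁ (T₀ + τ + 1); linarith
    have hFs₀ : S - η < F s₀ :=
      lt_of_lt_of_le (ht₁ ▸ hyv) (hFmono (le_max_left _ _))
    -- oscillation bound beyond s₀
    have hosc : ∀ t, s₀ ≤ t → x t - x s₀ ≤ A * η ∧ -(A*η) ≤ x t - x s₀ := by
      intro t ht
      have hbase : ∀ u : ℝ, u ∈ Icc s₀ t → (0:ℝ) ≤ u ∧
          (∀ j : Fin m, l - l/2 < x (u - σd j u)) ∧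
          (∀ j : Fin m, l - l/2 < x (u - τd j u) ∧ x (u - τd j u) < L + l/2) ∧
          l - l/2 < x u ∧ x u < L + l/2 := by
        intro u hu
        have hu0 : (0:ℝ) ≤ u := by
          have := hu.1; linarith
        have hdely : ∀ j : Fin m, T₀ ≤ u - σd j u ∧ T₀ ≤ u - τd j u := by
          intro j
          have h1 := (hτub j u hu0).1
          have h2 := (hτub j u hu0).2
          constructor <;> (have := hu.1; linarith)
        refine ⟨hu0, fun j => (hT₀ _ (hdely j).1).1,
          fun j => ⟨(hT₀ _ (hdely j).2).1, (hT₀ _ (hdely j).2).2⟩,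
          (hT₀ u (by have := hu.1; linarith)).1, (hT₀ u (by have := hu.1; linarith)).2⟩
      have hxid : ∫ u in s₀..t, (f u - δ u * x u) = x t - x s₀ := by
        apply intervalIntegral.integral_eq_sub_of_hasDerivAt
        · intro u hu
          rw [uIcc_of_le ht] at hu
          exact hfderiv u (by have := hu.1; linarith)
        · apply ContinuousOn.intervalIntegrable
          rw [uIcc_of_le ht]
          have hss : Icc s₀ t ⊆ Ici (0:ℝ) := fun u hu => by
            have := hu.1; simp only [mem_Ici]; linarith
          exact (hfc.mono hss).sub ((hδc.1.mono hss).mul (hxc0.mono hss))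
      have hptub : ∀ u ∈ Icc s₀ t, f u - δ u * x u ≤ A * δe u := by
        intro u hu
        obtain ⟨hu0, hσb, hτb, hxl, hxu⟩ := hbase u hu
        have h1 : f u ≤ (L + l/2) * Real.exp (C * (K - 0)) * δe u := by
          apply hfub 0 (L + l/2) u (by linarith) hKpos.le hu0
          · intro j; linarith [hσb j]
          · intro j; linarith [(hτb j).2]
        have h2 : 0 ≤ δ u * x u :=
          mul_nonneg (hδc.2 u hu0).le (by linarith)
        have h3 : (L + l/2) * Real.exp (C * (K - 0)) * δe u = A * δe u := by
          rw [hAdef]; ring_nf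
        linarith
      have hptlb : ∀ u ∈ Icc s₀ t, -(A * δe u) ≤ f u - δ u * x u := by
        intro u hu
        obtain ⟨hu0, hσb, hτb, hxl, hxu⟩ := hbase u hu
        have h1 : 0 ≤ f u := hf0 u hu0 (fun j => by linarith [(hτb j).1])
        have h2 : δ u * x u ≤ A * δe u := by
          rw [← hδe_eq u hu0]
          have h3 : δe u * x u ≤ δe u * (L + l/2) :=
            mul_le_mul_of_nonneg_left hxu.le (hδe_pos u).le
          have h4 : (1:ℝ) ≤ Real.exp (C*K) :=
            Real.one_le_exp (mul_nonneg hC_pos.le hKpos.le)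
          have h5 : δe u * (L + l/2) ≤ A * δe u := by
            rw [hAdef]
            nlinarith [mul_le_mul_of_nonneg_right
              (mul_le_mul_of_nonneg_left h4 (show (0:ℝ) ≤ L + l/2 by linarith))
              (hδe_pos u).le]
          linarith
        linarith
      have hFts₀ : F t - F s₀ ≤ η := by
        have h1 : F t ≤ S := le_csSup hbd (mem_range_self t)
        linarith
      have hFts₀' : 0 ≤ F t - F s₀ := by
        have := hFmono ht; linarith
      have hintc : IntervalIntegrable (fun u => f u - δ u * x u) volume s₀ t := by
        apply ContinuousOn.intervalIntegrable
        rw [uIcc_of_le ht]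
        have hss : Icc s₀ t ⊆ Ici (0:ℝ) := fun u hu => by
          have := hu.1; simp only [mem_Ici]; linarith
        exact (hfc.mono hss).sub ((hδc.1.mono hss).mul (hxc0.mono hss))
      constructor
      · have h1 : ∫ u in s₀..t, (f u - δ u * x u) ≤ ∫ u in s₀..t, A * δe u := by
          apply intervalIntegral.integral_mono_on ht hintc
            ((continuous_const.mul hδe_cont).intervalIntegrable _ _) hptub
        rw [intervalIntegral.integral_const_mul, ← hFsub s₀ t] at h1
        have h2 : A * (F t - F s₀) ≤ A * η :=
          mul_le_mul_of_nonneg_left hFts₀ hA0.le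
        rw [hxid] at h1
        linarith
      · have h1 : ∫ u in s₀..t, (-(A * δe u)) ≤ ∫ u in s₀..t, (f u - δ u * x u) := by
          apply intervalIntegral.integral_mono_on ht
            (((continuous_const.mul hδe_cont).neg).intervalIntegrable _ _) hintc hptlb
        have h2 : ∫ u in s₀..t, (-(A * δe u)) = -(A * (F t - F s₀)) := by
          rw [intervalIntegral.integral_neg, intervalIntegral.integral_const_mul,
            ← hFsub s₀ t]
        have h3 : -(A*η) ≤ -(A * (F t - F s₀)) := by
          have := mul_le_mul_of_nonneg_left hFts₀ hA0.le; linarith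
        rw [h2, hxid] at h1
        linarith
    have hLup : L ≤ x s₀ + A * η := by
      rw [hL]
      apply limsup_le_of_le hxlb.isCoboundedUnder_le
      filter_upwards [eventually_ge_atTop s₀] with t ht
      linarith [(hosc t ht).1]
    have hlow : x s₀ - A * η ≤ l := by
      rw [hl]
      apply le_liminf_of_le hbdd.isCoboundedUnder_ge
      filter_upwards [eventually_ge_atTop s₀] with t ht
      linarith [(hosc t ht).2]
    have hAη : A * η = (L - l)/4 := by
      rw [hηdef]
      field_simp
    rw [hAη] at hLup hlow
    linarith
  -- CASE I: refute K ≤ l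
  have hcaseI : ¬ K ≤ l := by
    intro hKl
    have hexp1 : Real.exp (-1) < 1 := by
      have h := Real.exp_lt_exp.mpr (show (-1:ℝ) < 0 by norm_num)
      simpa using h
    have hexp1' : (0:ℝ) < Real.exp (-1) := Real.exp_pos _
    set Δ : ℝ := (L - K) * (1 - Real.exp (-1)) with hΔdef
    have hΔpos : 0 < Δ := mul_pos (by linarith) (by linarith)
    set R₂ : ℝ := B + 2 with hR₂def
    have hR₂1 : (1:ℝ) ≤ R₂ := by linarith
    have he1 : (1:ℝ) ≤ Real.exp 1 := Real.one_le_exp (by norm_num)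
    set Λ : ℝ := Real.exp (B+2) * (L*C*Real.exp 1 + Real.exp 1 + 2) with hΛdef
    have hΛpos : 0 < Λ := by
      apply mul_pos (Real.exp_pos _)
      linarith only [mul_pos (mul_pos hL0 hC_pos) (Real.exp_pos 1), Real.exp_pos 1]
    set W : ℝ := 2*Λ/(c*L) with hWdef
    have hWpos : 0 < W := div_pos (by linarith) (mul_pos hc_pos hL0)
    set P : ℝ := 1 + Λ + W with hPdef
    have hPpos : 0 < P := by linarith
    set ε : ℝ := min (min 1 (1/(C+1))) (min (l/2) (min (L/(2*Λ+2)) (Δ/(2*P)))) with hεdef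
    have hεpos : 0 < ε := by
      rw [hεdef]
      apply lt_min (lt_min one_pos (div_pos one_pos (by linarith)))
      apply lt_min (by linarith)
      exact lt_min (div_pos hL0 (by linarith)) (div_pos hΔpos (by linarith))
    have hε1 : ε ≤ 1 := le_trans (min_le_left _ _) (min_le_left _ _)
    have hεC : C * ε ≤ 1 := by
      have h1 : ε ≤ 1/(C+1) := le_trans (min_le_left _ _) (min_le_right _ _)
      have h2 : C * ε ≤ C * (1/(C+1)) := mul_le_mul_of_nonneg_left h1 hC_pos.le
      rw [mul_one_div] at h2
      have h3 : C/(C+1) ≤ 1 := by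
        rw [div_le_one (by linarith)]; linarith
      linarith
    have hεl : ε ≤ l/2 := le_trans (min_le_right _ _) (min_le_left _ _)
    have hεΛL : ε * Λ ≤ L/2 := by
      have h1 : ε ≤ L/(2*Λ+2) :=
        le_trans (min_le_right _ _) (le_trans (min_le_right _ _) (min_le_left _ _))
      have h2 : ε * (2*Λ+2) ≤ L := by
        rw [← le_div_iff₀ (by linarith)]
        exact h1
      linarith only [h2, mul_pos hεpos hΛpos, hεpos]
    have hεP : ε * (2*P) ≤ Δ := by
      have h1 : ε ≤ Δ/(2*P) :=
        le_trans (min_le_right _ _) (le_trans (min_le_right _ _) (min_le_right _ _))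
      exact (le_div_iff₀ (by linarith)).mp h1
    obtain ⟨T₀, hT₀0, hT₀⟩ := hev ε hεpos
    have hdelay : ∀ u : ℝ, T₀ + τ + 1 ≤ u → 0 ≤ u ∧ (l - ε < x u ∧ x u < L + ε) ∧
        (∀ j : Fin m, (l - ε < x (u - τd j u) ∧ x (u - τd j u) < L + ε) ∧
          (l - ε < x (u - σd j u) ∧ x (u - σd j u) < L + ε)) := by
      intro u hu
      have hu0 : (0:ℝ) ≤ u := by linarith
      refine ⟨hu0, hT₀ u (by linarith), fun j => ⟨hT₀ _ ?_, hT₀ _ ?_⟩⟩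
      · have h1 := (hτub j u hu0).1; have h2 := ((hdel j).2.2.1 u hu0).1; linarith
      · have h1 := (hτub j u hu0).2; have h2 := ((hdel j).2.2.1 u hu0).2; linarith
    set T₄ : ℝ := max (T₀ + τ + 1) 1 with hT₄def
    have hT₄T : T₀ + τ + 1 ≤ T₄ := le_max_left _ _
    have hT₄1 : (1:ℝ) ≤ T₄ := le_max_right _ _
    set Qc : ℝ := (L+ε) * Real.exp (C*ε) with hQcdef
    have hQcL : L + ε ≤ Qc := by
      rw [hQcdef]
      have h1 := mul_le_mul_of_nonneg_left
        (Real.one_le_exp (mul_nonneg hC_pos.le hεpos.le))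
        (show (0:ℝ) ≤ L+ε by linarith)
      linarith only [h1]
    set g : ℝ → ℝ := fun u => Qc * δe u - f u with hgdef
    have hgnn : ∀ u : ℝ, T₄ ≤ u → 0 ≤ g u := by
      intro u hu
      obtain ⟨hu0, _, hdel2⟩ := hdelay u (le_trans hT₄T hu)
      have h1 : f u ≤ (L+ε) * Real.exp (C * (K - (K-ε))) * δe u := by
        apply hfub (K-ε) (L+ε) u (by linarith) (by linarith) hu0
        · intro j; have h2 := ((hdel2 j).2).1; linarith
        · intro j; exact (((hdel2 j).1).2).le
      have h2 : (L+ε) * Real.exp (C * (K - (K-ε))) * δe u = Qc * δe u := by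
        rw [hQcdef]; ring_nf
      simp only [hgdef]
      rw [h2] at h1
      linarith only [h1]
    have hgc : ContinuousOn g (Ici 0) := by
      simp only [hgdef]
      exact ((continuous_const.mul hδe_cont).continuousOn).sub hfc
    have hgint : ∀ w v : ℝ, 0 ≤ w → w ≤ v → IntervalIntegrable g volume w v := by
      intro w v h0 h1
      apply ContinuousOn.intervalIntegrable
      rw [uIcc_of_le h1]
      exact hgc.mono (fun u hu => le_trans h0 hu.1)
    have hgEint : ∀ w v : ℝ, 0 ≤ w → w ≤ v →
        IntervalIntegrable (fun u => g u * E u) volume w v := by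
      intro w v h0 h1
      apply ContinuousOn.intervalIntegrable
      rw [uIcc_of_le h1]
      exact (hgc.mono (fun u hu => le_trans h0 hu.1)).mul hEc.continuousOn
    -- peak selection
    obtain ⟨s, hspk, hsF, hsT⟩ : ∃ s : ℝ, L - ε < x s ∧ F T₄ + R₂ ≤ F s ∧ T₄ ≤ s := by
      have h1 : ∃ᶠ t in atTop, L - ε < x t :=
        frequently_lt_of_lt_limsup hxlb.isCoboundedUnder_le (by rw [← hL]; linarith)
      have h2 : ∀ᶠ t in atTop, F T₄ + R₂ ≤ F t := hFtop.eventually_ge_atTop _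
      obtain ⟨s, h3, h4, h5⟩ := (h1.and_eventually (h2.and (eventually_ge_atTop T₄))).exists
      exact ⟨s, h3, h4, h5⟩
    obtain ⟨r, hrmem, hFr⟩ : ∃ r ∈ Icc T₄ s, F r = F s - R₂ := by
      have h1 : F s - R₂ ∈ Icc (F T₄) (F s) := ⟨by linarith, by linarith⟩
      obtain ⟨r, hr1, hr2⟩ := intermediate_value_Icc hsT hFc.continuousOn h1
      exact ⟨r, hr1, hr2⟩
    have hrT₄ : T₄ ≤ r := hrmem.1
    have hrs : r ≤ s := hrmem.2
    have hr1 : (1:ℝ) ≤ r := le_trans hT₄1 hrT₄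
    have hr0 : (0:ℝ) ≤ r := by linarith
    have hEsr : E s = E r * Real.exp R₂ := by
      simp only [hEdef]
      rw [hFr, ← Real.exp_add]
      congr 1
      ring
    set Γ : ℝ := (L+ε) + Qc * (Real.exp R₂ - 1) - (L-ε) * Real.exp R₂ with hΓdef
    -- ∫_r^s g(u) E(u) du ≤ E r * Γ
    have hgEub : ∫ u in r..s, g u * E u ≤ E r * Γ := by
      have h2 : ∀ u : ℝ, g u * E u = Qc * (δe u * E u) - f u * E u := by
        intro u; simp only [hgdef]; ring
      have hcg : ∫ u in r..s, g u * E u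
          = ∫ u in r..s, (Qc * (δe u * E u) - f u * E u) :=
        intervalIntegral.integral_congr (fun u _ => h2 u)
      rw [hcg, intervalIntegral.integral_sub (f := fun u => Qc * (δe u * E u))
        ((continuous_const.mul (hδe_cont.mul hEc)).intervalIntegrable _ _)
        (by
          apply ContinuousOn.intervalIntegrable
          rw [uIcc_of_le hrs]
          exact (hfc.mono (fun u hu => le_trans hr0 hu.1)).mul hEc.continuousOn),
        intervalIntegral.integral_const_mul, hVOCδ r s, hVOC r s hr1 hrs]
      have h3 : (L-ε) * E s ≤ x s * E s :=
        mul_le_mul_of_nonneg_right hspk.le (hEpos s).le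
      have h4 : x r * E r ≤ (L+ε) * E r := by
        have h5 := ((hdelay r (le_trans hT₄T hrT₄)).2.1).2
        exact mul_le_mul_of_nonneg_right h5.le (hEpos r).le
      have h6 : Qc * (E s - E r) - ((L-ε) * E s - (L+ε) * E r) = E r * Γ := by
        rw [hΓdef, hEsr]; ring
      linarith only [h3, h4, h6]
    have hintg_le_Γ : ∫ u in r..s, g u ≤ Γ := by
      have h1 : ∫ u in r..s, E r * g u ≤ ∫ u in r..s, g u * E u := by
        apply intervalIntegral.integral_mono_on hrs
          ((hgint r s hr0 hrs).const_mul _) (hgEint r s hr0 hrs)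
        intro u hu
        have h2 : E r ≤ E u := Real.exp_le_exp.mpr (hFmono hu.1)
        have h3 : 0 ≤ g u := hgnn u (le_trans hrT₄ hu.1)
        linarith only [mul_le_mul_of_nonneg_left h2 h3]
      rw [intervalIntegral.integral_const_mul] at h1
      have h4 := le_trans h1 hgEub
      exact le_of_mul_le_mul_left h4 (hEpos r)
    have hintg_nn : 0 ≤ ∫ u in r..s, g u :=
      intervalIntegral.integral_nonneg hrs (fun u hu => hgnn u (le_trans hrT₄ hu.1))
    have hΓ0 : 0 ≤ Γ := le_trans hintg_nn hintg_le_Γ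
    -- Γ ≤ ε * Λ
    have hΓΛ : Γ ≤ ε * Λ := by
      have h2 : (0:ℝ) < Real.exp (C*ε) := Real.exp_pos _
      have hA1 : Real.exp (C*ε) * (1 - C*ε) ≤ 1 := by
        have h := Real.add_one_le_exp (-(C*ε))
        rw [Real.exp_neg] at h
        have h3 : Real.exp (C*ε) * (Real.exp (C*ε))⁻¹ = 1 := mul_inv_cancel₀ (ne_of_gt h2)
        linarith only [mul_le_mul_of_nonneg_left h h2.le, h3]
      have hA2 : Real.exp (C*ε) ≤ Real.exp 1 := Real.exp_le_exp.mpr hεC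
      have h4 : Real.exp (C*ε) ≤ 1 + (C*ε) * Real.exp 1 := by
        have h5 := mul_le_mul_of_nonneg_left hA2 (mul_nonneg hC_pos.le hεpos.le)
        linarith only [hA1, h5]
      have hQcub : Qc ≤ L + ε + ε * (L*C*Real.exp 1 + Real.exp 1) := by
        rw [hQcdef]
        have h6 := mul_le_mul_of_nonneg_left h4 (show (0:ℝ) ≤ L+ε by linarith)
        have h7 := mul_le_mul_of_nonneg_left hεC
          (mul_nonneg hεpos.le (Real.exp_pos 1).le)
        nlinarith only [h6, h7]
      have h5 : Γ ≤ Real.exp R₂ * (Qc - (L-ε)) := by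
        have h6 : Γ = Real.exp R₂ * (Qc - (L-ε)) - (Qc - (L+ε)) := by
          rw [hΓdef]; ring
        have h7 : 0 ≤ Qc - (L+ε) := by linarith only [hQcL]
        linarith only [h6, h7]
      have h8 : Qc - (L-ε) ≤ ε*(L*C*Real.exp 1 + Real.exp 1 + 2) := by
        linarith only [hQcub, hεpos]
      have h9 : Real.exp R₂ * (Qc - (L-ε)) ≤
          Real.exp R₂ * (ε*(L*C*Real.exp 1 + Real.exp 1 + 2)) := by
        apply mul_le_mul_of_nonneg_left h8 (Real.exp_pos _).le
      have h10 : Real.exp R₂ * (ε*(L*C*Real.exp 1 + Real.exp 1 + 2)) = ε * Λ := by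
        rw [hΛdef, hR₂def]; ring
      linarith only [h5, h9, h10]
    -- minimisation point u₀
    obtain ⟨r₁, hr₁mem, hFr₁⟩ : ∃ r₁ ∈ Icc r s, F r₁ = F s - 1 := by
      have h1 : F s - 1 ∈ Icc (F r) (F s) := ⟨by rw [hFr]; linarith, by linarith⟩
      obtain ⟨r₁, h2, h3⟩ := intermediate_value_Icc hrs hFc.continuousOn h1
      exact ⟨r₁, h2, h3⟩
    have hr₁s : r₁ ≤ s := hr₁mem.2
    have hrr₁ : r ≤ r₁ := hr₁mem.1
    have hr₁0 : (0:ℝ) ≤ r₁ := le_trans hr0 hrr₁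
    set ρ : ℝ → ℝ := fun u => g u / δe u with hρdef
    have hρc : ContinuousOn ρ (Icc r₁ s) := by
      apply ContinuousOn.div
        (hgc.mono (fun u hu => le_trans hr₁0 hu.1))
        (hδe_cont.continuousOn)
        (fun u _ => (hδe_pos u).ne')
    obtain ⟨u₀, hu₀mem, hu₀min⟩ :=
      isCompact_Icc.exists_isMinOn (⟨r₁, le_refl r₁, hr₁s⟩ : (Icc r₁ s).Nonempty) hρc
    have hu₀r : r ≤ u₀ := le_trans hrr₁ hu₀mem.1
    have hu₀s : u₀ ≤ s := hu₀mem.2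
    have hu₀0 : (0:ℝ) ≤ u₀ := le_trans hr0 hu₀r
    have hu₀T : T₀ + τ + 1 ≤ u₀ := le_trans hT₄T (le_trans hrT₄ hu₀r)
    have hρΓ : ρ u₀ ≤ Γ := by
      have h1 : ∀ u ∈ Icc r₁ s, ρ u₀ * δe u ≤ g u := by
        intro u hu
        have h2 : ρ u₀ ≤ ρ u := isMinOn_iff.mp hu₀min u hu
        have h3 : g u / δe u * δe u = g u := div_mul_cancel₀ (g u) (hδe_pos u).ne'
        calc ρ u₀ * δe u ≤ ρ u * δe u := mul_le_mul_of_nonneg_right h2 (hδe_pos u).le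
          _ = g u := h3
      have h4 : ∫ u in r₁..s, ρ u₀ * δe u ≤ ∫ u in r₁..s, g u :=
        intervalIntegral.integral_mono_on hr₁s
          ((continuous_const.mul hδe_cont).intervalIntegrable _ _)
          (hgint r₁ s hr₁0 hr₁s) h1
      rw [intervalIntegral.integral_const_mul, ← hFsub r₁ s, hFr₁] at h4
      have h5 : F s - (F s - 1) = 1 := by ring
      rw [h5, mul_one] at h4
      have h6 : ∫ u in r₁..s, g u ≤ ∫ u in r..s, g u := by
        have h7 := intervalIntegral.integral_add_adjacent_intervals
          (hgint r r₁ hr0 hrr₁) (hgint r₁ s hr₁0 hr₁s)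
        have h8 : 0 ≤ ∫ u in r..r₁, g u :=
          intervalIntegral.integral_nonneg hrr₁
            (fun u hu => hgnn u (le_trans hrT₄ hu.1))
        linarith only [h7, h8]
      linarith only [h4, h6, hintg_le_Γ]
    have hgu₀ : g u₀ ≤ Γ * δe u₀ := by
      have h1 : g u₀ = ρ u₀ * δe u₀ := (div_mul_cancel₀ (g u₀) (hδe_pos u₀).ne').symm
      rw [h1]
      exact mul_le_mul_of_nonneg_right hρΓ (hδe_pos u₀).le
    have hfu₀ : (Qc - Γ) * δe u₀ ≤ f u₀ := by
      simp only [hgdef] at hgu₀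
      linarith only [hgu₀]
    -- extract j₀ with small delayed value
    have hex : ∃ j : Fin m, (Qc - Γ) * Real.exp (-(a j u₀ * K)) ≤
        (L+ε) * Real.exp (-(a j u₀ * x (u₀ - σd j u₀))) := by
      by_contra hno
      push_neg at hno
      have h1 : f u₀ ≤ ∑ j, p j u₀ * ((L+ε) * Real.exp (-(a j u₀ * x (u₀ - σd j u₀)))) := by
        rw [hfdef]
        apply Finset.sum_le_sum
        intro j _
        have hp0 : 0 < p j u₀ := (hp j).2 u₀ hu₀0
        have hxτ : x (u₀ - τd j u₀) ≤ L + ε := ((((hdelay u₀ hu₀T).2.2 j).1).2).le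
        calc p j u₀ * x (u₀ - τd j u₀) * Real.exp (-(a j u₀ * x (u₀ - σd j u₀)))
            = p j u₀ * (x (u₀ - τd j u₀) * Real.exp (-(a j u₀ * x (u₀ - σd j u₀)))) := by
              ring
          _ ≤ p j u₀ * ((L+ε) * Real.exp (-(a j u₀ * x (u₀ - σd j u₀)))) := by
              apply mul_le_mul_of_nonneg_left _ hp0.le
              exact mul_le_mul_of_nonneg_right hxτ (Real.exp_pos _).le
      have h2 : ∑ j, p j u₀ * ((L+ε) * Real.exp (-(a j u₀ * x (u₀ - σd j u₀))))
          < ∑ j, p j u₀ * ((Qc - Γ) * Real.exp (-(a j u₀ * K))) := by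
        apply Finset.sum_lt_sum_of_nonempty Finset.univ_nonempty
        intro j _
        exact mul_lt_mul_of_pos_left (hno j) ((hp j).2 u₀ hu₀0)
      have h3 : ∑ j, p j u₀ * ((Qc - Γ) * Real.exp (-(a j u₀ * K)))
          = (Qc - Γ) * δe u₀ := by
        rw [hδe_eq u₀ hu₀0, hK1 u₀ hu₀0, Finset.mul_sum]
        exact Finset.sum_congr rfl (fun j _ => by ring)
      rw [h3] at h2
      linarith only [h1, h2, hfu₀]
    obtain ⟨j₀, hj₀⟩ := hex
    set v : ℝ := u₀ - σd j₀ u₀ with hvdef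
    set β : ℝ := Γ / (L+ε) with hβdef
    have hβ0 : 0 ≤ β := div_nonneg hΓ0 (by linarith)
    have hβh : β ≤ 1/2 := by
      have h1 : Γ ≤ L/2 := le_trans hΓΛ hεΛL
      rw [hβdef, div_le_iff₀ (show (0:ℝ) < L + ε by linarith)]
      linarith only [h1, hεpos]
    set α : ℝ := a j₀ u₀ with hαdef
    have hαc : c ≤ α := hcle j₀ u₀ hu₀0
    have hαyK : α * (x v - K) ≤ 2*β := by
      have h1 : (1-β) * ((L+ε) * Real.exp (-(α*K))) ≤ (L+ε) * Real.exp (-(α * x v)) := by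
        have h3 : β * (L+ε) = Γ := by
          rw [hβdef]; field_simp
        have h2 : (1-β)*(L+ε) ≤ Qc - Γ := by nlinarith only [hQcL, h3]
        calc (1-β) * ((L+ε) * Real.exp (-(α*K)))
            = ((1-β)*(L+ε)) * Real.exp (-(α*K)) := by ring
          _ ≤ (Qc - Γ) * Real.exp (-(α*K)) :=
              mul_le_mul_of_nonneg_right h2 (Real.exp_pos _).le
          _ ≤ (L+ε) * Real.exp (-(α * x v)) := hj₀
      have h4 : (1-β) * Real.exp (-(α*K)) ≤ Real.exp (-(α * x v)) := by
        have h5 : (L+ε) * ((1-β) * Real.exp (-(α*K))) ≤ (L+ε) * Real.exp (-(α * x v)) := by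
          linarith only [h1]
        exact le_of_mul_le_mul_left h5 (by linarith)
      have h6 : Real.exp (-(2*β)) * Real.exp (-(α*K)) ≤ Real.exp (-(α * x v)) :=
        le_trans (mul_le_mul_of_nonneg_right (exp_neg_two_mul_le hβ0 hβh)
          (Real.exp_pos _).le) h4
      rw [← Real.exp_add] at h6
      have h7 := Real.exp_le_exp.mp h6
      linarith only [h7]
    have hxvK : x v ≤ K + ε * W := by
      rcases le_or_gt (x v) K with h | h
      · linarith only [h, mul_pos hεpos hWpos]
      · have h5 : c * (x v - K) ≤ α * (x v - K) :=
          mul_le_mul_of_nonneg_right hαc (by linarith)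
        have h6 : β ≤ ε*Λ/L :=
          div_le_div₀ (mul_nonneg hεpos.le hΛpos.le) hΓΛ hL0 (by linarith)
        have hc0 : c ≠ 0 := hc_pos.ne'
        have hL0' : L ≠ 0 := hL0.ne'
        have h7 : c * (ε*W) = 2*(ε*Λ/L) := by
          rw [hWdef]; field_simp
        have h8 : c * (x v - K) ≤ c * (ε*W) := by
          rw [h7]; linarith only [h5, hαyK, h6]
        have h9 := le_of_mul_le_mul_left h8 hc_pos
        linarith only [h9]
    -- window bound : F u₀ - F v ≤ B, hence r ≤ v
    have hvu₀ : v ≤ u₀ := by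
      have h1 := ((hdel j₀).2.2.1 u₀ hu₀0).2
      rw [hvdef]; linarith
    have hvT : T₀ + 1 ≤ v := by
      have h1 := (hτub j₀ u₀ hu₀0).2
      rw [hvdef]; linarith [hu₀T]
    have hv0 : (0:ℝ) ≤ v := by linarith
    have hFvu₀ : F u₀ - F v ≤ B := by
      rw [hFsub v u₀]
      have h1 : ∀ u ∈ Icc v u₀, δe u ≤ ∑ k, p k u := by
        intro u hu
        have hu0 : (0:ℝ) ≤ u := le_trans hv0 hu.1
        rw [hδe_eq u hu0, hK1 u hu0]
        apply Finset.sum_le_sum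
        intro k _
        have h2 : Real.exp (-(a k u * K)) ≤ 1 := by
          rw [Real.exp_le_one_iff]
          have h9 : 0 ≤ a k u * K :=
            mul_nonneg (by linarith only [hcle k u hu0, hc_pos]) hKpos.le
          linarith only [h9]
        calc p k u * Real.exp (-(a k u * K)) ≤ p k u * 1 :=
            mul_le_mul_of_nonneg_left h2 ((hp k).2 u hu0).le
          _ = p k u := mul_one _
      have h3 : ∫ u in v..u₀, δe u ≤ ∫ u in v..u₀, (∑ k, p k u) := by
        apply intervalIntegral.integral_mono_on hvu₀
          (hδe_cont.intervalIntegrable _ _) _ h1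
        apply ContinuousOn.intervalIntegrable
        rw [uIcc_of_le hvu₀]
        apply (continuousOn_finset_sum Finset.univ (fun k _ => (hp k).1)).mono
        intro u hu
        exact le_trans hv0 hu.1
      have h4 := hBle j₀ u₀ hu₀0
      rw [← hvdef] at h4
      linarith only [h3, h4]
    have hFvr : F r + 1 ≤ F v := by
      have h1 : F r₁ ≤ F u₀ := hFmono hu₀mem.1
      rw [hFr₁] at h1
      rw [hFr]
      linarith only [h1, hFvu₀, hR₂def]
    have hrv : r ≤ v := by
      by_contra h
      push_neg at h
      have h1 := hFmono h.le
      linarith only [h1, hFvr]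
    have hvs : v ≤ s := le_trans hvu₀ hu₀s
    obtain ⟨w, hwmem, hFw⟩ : ∃ w ∈ Icc r v, F w = F v - 1 := by
      have h1 : F v - 1 ∈ Icc (F r) (F v) := ⟨by linarith, by linarith⟩
      obtain ⟨w, h2, h3⟩ := intermediate_value_Icc hrv hFc.continuousOn h1
      exact ⟨w, h2, h3⟩
    have hw1 : (1:ℝ) ≤ w := le_trans hr1 hwmem.1
    have hw0 : (0:ℝ) ≤ w := by linarith
    have hwv : w ≤ v := hwmem.2
    have hEwv : E w = E v * Real.exp (-1) := by
      simp only [hEdef]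
      rw [← Real.exp_add, hFw]
      norm_num [sub_eq_add_neg]
    -- VOC on [w, v] and the lower bound for x v
    have hxvlb : (K - ε) * Real.exp (-1) + (L+ε) * (1 - Real.exp (-1)) - Γ ≤ x v := by
      have h2 : ∀ u : ℝ, f u * E u = Qc * (δe u * E u) - g u * E u := by
        intro u; simp only [hgdef]; ring
      have hcg : ∫ u in w..v, f u * E u
          = ∫ u in w..v, (Qc * (δe u * E u) - g u * E u) :=
        intervalIntegral.integral_congr (fun u _ => h2 u)
      have h1 : x v * E v - x w * E w
          = Qc * (E v - E w) - ∫ u in w..v, g u * E u := by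
        rw [← hVOC w v hw1 hwv, hcg, intervalIntegral.integral_sub (f := fun u => Qc * (δe u * E u))
          ((continuous_const.mul (hδe_cont.mul hEc)).intervalIntegrable _ _)
          (hgEint w v hw0 hwv),
          intervalIntegral.integral_const_mul, hVOCδ w v]
      have hgEwv : ∫ u in w..v, g u * E u ≤ Γ * E v := by
        have h3 : ∀ u ∈ Icc w v, g u * E u ≤ g u * E v := by
          intro u hu
          exact mul_le_mul_of_nonneg_left (Real.exp_le_exp.mpr (hFmono hu.2))
            (hgnn u (le_trans hrT₄ (le_trans hwmem.1 hu.1)))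
        have h4 : ∫ u in w..v, g u * E u ≤ ∫ u in w..v, g u * E v :=
          intervalIntegral.integral_mono_on hwv (hgEint w v hw0 hwv)
            ((hgint w v hw0 hwv).mul_const _) h3
        rw [intervalIntegral.integral_mul_const] at h4
        have h5 : ∫ u in w..v, g u ≤ Γ := by
          have h6 := intervalIntegral.integral_add_adjacent_intervals
            (hgint r w hr0 hwmem.1) (hgint w v hw0 hwv)
          have h7 := intervalIntegral.integral_add_adjacent_intervals
            (hgint r v hr0 hrv) (hgint v s hv0 hvs)
          have h8 : 0 ≤ ∫ u in r..w, g u :=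
            intervalIntegral.integral_nonneg hwmem.1
              (fun u hu => hgnn u (le_trans hrT₄ hu.1))
          have h9 : 0 ≤ ∫ u in v..s, g u :=
            intervalIntegral.integral_nonneg hvs
              (fun u hu => hgnn u (le_trans hrT₄ (le_trans hrv hu.1)))
          linarith only [h6, h7, h8, h9, hintg_le_Γ]
        linarith only [h4, mul_le_mul_of_nonneg_right h5 (hEpos v).le]
      have hxw : K - ε ≤ x w := by
        have h10 := ((hdelay w (le_trans hT₄T (le_trans hrT₄ hwmem.1))).2.1).1
        linarith only [h10, hKl]
      have h11 : (K-ε) * E w + (L+ε) * (E v - E w) - Γ * E v ≤ x v * E v := by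
        have h12 : E w ≤ E v := Real.exp_le_exp.mpr (hFmono hwv)
        have h13 : (L+ε) * (E v - E w) ≤ Qc * (E v - E w) :=
          mul_le_mul_of_nonneg_right hQcL (by linarith)
        have h14 : (K-ε) * E w ≤ x w * E w :=
          mul_le_mul_of_nonneg_right hxw (hEpos w).le
        linarith only [h1, hgEwv, h13, h14]
      rw [hEwv] at h11
      have h15 : ((K-ε) * Real.exp (-1) + (L+ε)*(1 - Real.exp (-1)) - Γ) * E v
          ≤ x v * E v := by linarith only [h11]
      exact le_of_mul_le_mul_right h15 (hEpos v)
    -- final contradiction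
    have hfin1 : Δ ≤ ε + ε*Λ + ε*W := by
      rw [hΔdef]
      have h16 := mul_le_mul_of_nonneg_left hexp1.le hεpos.le
      nlinarith only [hxvlb, hxvK, hΓΛ, h16]
    rw [hPdef] at hεP
    nlinarith only [hεP, hfin1, mul_pos hεpos hΛpos, mul_pos hεpos hWpos, hεpos, hΔpos]
  
  -- CASE II: refute L ≤ K
  have hcaseII : ¬ L ≤ K := by
    intro hLK
    have hexp1 : Real.exp (-1) < 1 := by
      have h := Real.exp_lt_exp.mpr (show (-1:ℝ) < 0 by norm_num)
      simpa using h
    have hexp1' : (0:ℝ) < Real.exp (-1) := Real.exp_pos _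
    set Δ : ℝ := (L - l) * (1 - Real.exp (-1)) with hΔdef
    have hΔpos : 0 < Δ := mul_pos (by linarith) (by linarith)
    set R₂ : ℝ := B + 2 with hR₂def
    have hR₂1 : (1:ℝ) ≤ R₂ := by linarith
    set Λ : ℝ := Real.exp (B+2) * (l*C + 2) with hΛdef
    have hΛpos : 0 < Λ := by
      apply mul_pos (Real.exp_pos _)
      linarith only [mul_pos hlpos hC_pos]
    set W : ℝ := 2*Λ/(c*l) with hWdef
    have hWpos : 0 < W := div_pos (by linarith) (mul_pos hc_pos hlpos)
    set P : ℝ := 1 + Λ + W with hPdef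
    have hPpos : 0 < P := by linarith
    set ε : ℝ := min (min 1 (1/(C+1))) (min (l/2) (Δ/(2*P))) with hεdef
    have hεpos : 0 < ε := by
      rw [hεdef]
      apply lt_min (lt_min one_pos (div_pos one_pos (by linarith)))
      exact lt_min (by linarith) (div_pos hΔpos (by linarith))
    have hε1 : ε ≤ 1 := le_trans (min_le_left _ _) (min_le_left _ _)
    have hεC : C * ε ≤ 1 := by
      have h1 : ε ≤ 1/(C+1) := le_trans (min_le_left _ _) (min_le_right _ _)
      have h2 : C * ε ≤ C * (1/(C+1)) := mul_le_mul_of_nonneg_left h1 hC_pos.le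
      rw [mul_one_div] at h2
      have h3 : C/(C+1) ≤ 1 := by
        rw [div_le_one (by linarith)]; linarith
      linarith
    have hεl : ε ≤ l/2 := le_trans (min_le_right _ _) (min_le_left _ _)
    have hεP : ε * (2*P) ≤ Δ := by
      have h1 : ε ≤ Δ/(2*P) := le_trans (min_le_right _ _) (min_le_right _ _)
      exact (le_div_iff₀ (by linarith)).mp h1
    obtain ⟨T₀, hT₀0, hT₀⟩ := hev ε hεpos
    have hdelay : ∀ u : ℝ, T₀ + τ + 1 ≤ u → 0 ≤ u ∧ (l - ε < x u ∧ x u < L + ε) ∧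
        (∀ j : Fin m, (l - ε < x (u - τd j u) ∧ x (u - τd j u) < L + ε) ∧
          (l - ε < x (u - σd j u) ∧ x (u - σd j u) < L + ε)) := by
      intro u hu
      have hu0 : (0:ℝ) ≤ u := by linarith
      refine ⟨hu0, hT₀ u (by linarith), fun j => ⟨hT₀ _ ?_, hT₀ _ ?_⟩⟩
      · have h1 := (hτub j u hu0).1; have h2 := ((hdel j).2.2.1 u hu0).1; linarith
      · have h1 := (hτub j u hu0).2; have h2 := ((hdel j).2.2.1 u hu0).2; linarith
    set T₄ : ℝ := max (T₀ + τ + 1) 1 with hT₄def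
    have hT₄T : T₀ + τ + 1 ≤ T₄ := le_max_left _ _
    have hT₄1 : (1:ℝ) ≤ T₄ := le_max_right _ _
    set Q₂ : ℝ := (l-ε) * Real.exp (-(C*ε)) with hQdef
    have hQl : Q₂ ≤ l - ε := by
      have h1 : Real.exp (-(C*ε)) ≤ 1 := by
        rw [Real.exp_le_one_iff]
        linarith only [mul_nonneg hC_pos.le hεpos.le]
      have h2 := mul_le_mul_of_nonneg_left h1 (show (0:ℝ) ≤ l-ε by linarith)
      rw [hQdef]; linarith only [h2]
    have hQ0 : 0 < Q₂ := mul_pos (by linarith) (Real.exp_pos _)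
    set g : ℝ → ℝ := fun u => f u - Q₂ * δe u with hgdef
    have hgnn : ∀ u : ℝ, T₄ ≤ u → 0 ≤ g u := by
      intro u hu
      obtain ⟨hu0, _, hdel2⟩ := hdelay u (le_trans hT₄T hu)
      have h1 : (l-ε) * Real.exp (-(C * ((K+ε) - K))) * δe u ≤ f u := by
        apply hflb (l-ε) (K+ε) u (by linarith) (by linarith) hu0
        · intro j
          have h2 := (((hdel2 j).2).2)
          linarith only [h2, hLK]
        · intro j
          have h2 := (((hdel2 j).1).1)
          linarith only [h2]
      have h2 : (l-ε) * Real.exp (-(C * ((K+ε) - K))) * δe u = Q₂ * δe u := by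
        rw [hQdef]; ring_nf
      simp only [hgdef]
      rw [h2] at h1
      linarith only [h1]
    have hgc : ContinuousOn g (Ici 0) := by
      simp only [hgdef]
      exact hfc.sub ((continuous_const.mul hδe_cont).continuousOn)
    have hgint : ∀ w v : ℝ, 0 ≤ w → w ≤ v → IntervalIntegrable g volume w v := by
      intro w v h0 h1
      apply ContinuousOn.intervalIntegrable
      rw [uIcc_of_le h1]
      exact hgc.mono (fun u hu => le_trans h0 hu.1)
    have hgEint : ∀ w v : ℝ, 0 ≤ w → w ≤ v →
        IntervalIntegrable (fun u => g u * E u) volume w v := by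
      intro w v h0 h1
      apply ContinuousOn.intervalIntegrable
      rw [uIcc_of_le h1]
      exact (hgc.mono (fun u hu => le_trans h0 hu.1)).mul hEc.continuousOn
    -- valley selection
    obtain ⟨s, hspk, hsF, hsT⟩ : ∃ s : ℝ, x s < l + ε ∧ F T₄ + R₂ ≤ F s ∧ T₄ ≤ s := by
      have h1 : ∃ᶠ t in atTop, x t < l + ε :=
        frequently_lt_of_liminf_lt hbdd.isCoboundedUnder_ge (by rw [← hl]; linarith)
      have h2 : ∀ᶠ t in atTop, F T₄ + R₂ ≤ F t := hFtop.eventually_ge_atTop _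
      obtain ⟨s, h3, h4, h5⟩ := (h1.and_eventually (h2.and (eventually_ge_atTop T₄))).exists
      exact ⟨s, h3, h4, h5⟩
    obtain ⟨r, hrmem, hFr⟩ : ∃ r ∈ Icc T₄ s, F r = F s - R₂ := by
      have h1 : F s - R₂ ∈ Icc (F T₄) (F s) := ⟨by linarith, by linarith⟩
      obtain ⟨r, hr1, hr2⟩ := intermediate_value_Icc hsT hFc.continuousOn h1
      exact ⟨r, hr1, hr2⟩
    have hrT₄ : T₄ ≤ r := hrmem.1
    have hrs : r ≤ s := hrmem.2
    have hr1 : (1:ℝ) ≤ r := le_trans hT₄1 hrT₄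
    have hr0 : (0:ℝ) ≤ r := by linarith
    have hEsr : E s = E r * Real.exp R₂ := by
      simp only [hEdef]
      rw [hFr, ← Real.exp_add]
      congr 1
      ring
    set Γ : ℝ := (l+ε) * Real.exp R₂ - (l-ε) - Q₂ * (Real.exp R₂ - 1) with hΓdef
    have hgEub : ∫ u in r..s, g u * E u ≤ E r * Γ := by
      have h2 : ∀ u : ℝ, g u * E u = f u * E u - Q₂ * (δe u * E u) := by
        intro u; simp only [hgdef]; ring
      have hcg : ∫ u in r..s, g u * E u
          = ∫ u in r..s, (f u * E u - Q₂ * (δe u * E u)) :=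
        intervalIntegral.integral_congr (fun u _ => h2 u)
      rw [hcg, intervalIntegral.integral_sub (g := fun u => Q₂ * (δe u * E u))
        (by
          apply ContinuousOn.intervalIntegrable
          rw [uIcc_of_le hrs]
          exact (hfc.mono (fun u hu => le_trans hr0 hu.1)).mul hEc.continuousOn)
        ((continuous_const.mul (hδe_cont.mul hEc)).intervalIntegrable _ _),
        intervalIntegral.integral_const_mul, hVOCδ r s, hVOC r s hr1 hrs]
      have h3 : x s * E s ≤ (l+ε) * E s :=
        mul_le_mul_of_nonneg_right hspk.le (hEpos s).le
      have h4 : (l-ε) * E r ≤ x r * E r := by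
        have h5 := ((hdelay r (le_trans hT₄T hrT₄)).2.1).1
        exact mul_le_mul_of_nonneg_right h5.le (hEpos r).le
      have h6 : (l+ε) * E s - (l-ε) * E r - Q₂ * (E s - E r) = E r * Γ := by
        rw [hΓdef, hEsr]; ring
      linarith only [h3, h4, h6]
    have hintg_le_Γ : ∫ u in r..s, g u ≤ Γ := by
      have h1 : ∫ u in r..s, E r * g u ≤ ∫ u in r..s, g u * E u := by
        apply intervalIntegral.integral_mono_on hrs
          ((hgint r s hr0 hrs).const_mul _) (hgEint r s hr0 hrs)
        intro u hu
        have h2 : E r ≤ E u := Real.exp_le_exp.mpr (hFmono hu.1)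
        have h3 : 0 ≤ g u := hgnn u (le_trans hrT₄ hu.1)
        linarith only [mul_le_mul_of_nonneg_left h2 h3]
      rw [intervalIntegral.integral_const_mul] at h1
      have h4 := le_trans h1 hgEub
      exact le_of_mul_le_mul_left h4 (hEpos r)
    have hintg_nn : 0 ≤ ∫ u in r..s, g u :=
      intervalIntegral.integral_nonneg hrs (fun u hu => hgnn u (le_trans hrT₄ hu.1))
    have hΓ0 : 0 ≤ Γ := le_trans hintg_nn hintg_le_Γ
    have hΓΛ : Γ ≤ ε * Λ := by
      have h5 : Γ = Real.exp R₂ * ((l+ε) - Q₂) - ((l-ε) - Q₂) := by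
        rw [hΓdef]; ring
      have h1 : 1 - C*ε ≤ Real.exp (-(C*ε)) := by
        have h := Real.add_one_le_exp (-(C*ε)); linarith only [h]
      have h2 : (l-ε)*(1 - C*ε) ≤ Q₂ := by
        rw [hQdef]
        exact mul_le_mul_of_nonneg_left h1 (show (0:ℝ) ≤ l-ε by linarith)
      have hεε : 0 ≤ (C*ε)*ε := mul_nonneg (mul_nonneg hC_pos.le hεpos.le) hεpos.le
      have h3 : (l+ε) - Q₂ ≤ ε*(l*C + 2) := by nlinarith only [h2, hεε]
      have h7 : 0 ≤ (l-ε) - Q₂ := by linarith only [hQl]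
      have h9 : Real.exp R₂ * ((l+ε) - Q₂) ≤ Real.exp R₂ * (ε*(l*C + 2)) :=
        mul_le_mul_of_nonneg_left h3 (Real.exp_pos _).le
      have h10 : Real.exp R₂ * (ε*(l*C + 2)) = ε * Λ := by
        rw [hΛdef, hR₂def]; ring
      linarith only [h5, h7, h9, h10]
    -- minimisation point u₀
    obtain ⟨r₁, hr₁mem, hFr₁⟩ : ∃ r₁ ∈ Icc r s, F r₁ = F s - 1 := by
      have h1 : F s - 1 ∈ Icc (F r) (F s) := ⟨by rw [hFr]; linarith, by linarith⟩
      obtain ⟨r₁, h2, h3⟩ := intermediate_value_Icc hrs hFc.continuousOn h1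
      exact ⟨r₁, h2, h3⟩
    have hr₁s : r₁ ≤ s := hr₁mem.2
    have hrr₁ : r ≤ r₁ := hr₁mem.1
    have hr₁0 : (0:ℝ) ≤ r₁ := le_trans hr0 hrr₁
    set ρ : ℝ → ℝ := fun u => g u / δe u with hρdef
    have hρc : ContinuousOn ρ (Icc r₁ s) := by
      apply ContinuousOn.div
        (hgc.mono (fun u hu => le_trans hr₁0 hu.1))
        (hδe_cont.continuousOn)
        (fun u _ => (hδe_pos u).ne')
    obtain ⟨u₀, hu₀mem, hu₀min⟩ :=
      isCompact_Icc.exists_isMinOn (⟨r₁, le_refl r₁, hr₁s⟩ : (Icc r₁ s).Nonempty) hρc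
    have hu₀r : r ≤ u₀ := le_trans hrr₁ hu₀mem.1
    have hu₀s : u₀ ≤ s := hu₀mem.2
    have hu₀0 : (0:ℝ) ≤ u₀ := le_trans hr0 hu₀r
    have hu₀T : T₀ + τ + 1 ≤ u₀ := le_trans hT₄T (le_trans hrT₄ hu₀r)
    have hρΓ : ρ u₀ ≤ Γ := by
      have h1 : ∀ u ∈ Icc r₁ s, ρ u₀ * δe u ≤ g u := by
        intro u hu
        have h2 : ρ u₀ ≤ ρ u := isMinOn_iff.mp hu₀min u hu
        have h3 : g u / δe u * δe u = g u := div_mul_cancel₀ (g u) (hδe_pos u).ne'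
        calc ρ u₀ * δe u ≤ ρ u * δe u := mul_le_mul_of_nonneg_right h2 (hδe_pos u).le
          _ = g u := h3
      have h4 : ∫ u in r₁..s, ρ u₀ * δe u ≤ ∫ u in r₁..s, g u :=
        intervalIntegral.integral_mono_on hr₁s
          ((continuous_const.mul hδe_cont).intervalIntegrable _ _)
          (hgint r₁ s hr₁0 hr₁s) h1
      rw [intervalIntegral.integral_const_mul, ← hFsub r₁ s, hFr₁] at h4
      have h5 : F s - (F s - 1) = 1 := by ring
      rw [h5, mul_one] at h4
      have h6 : ∫ u in r₁..s, g u ≤ ∫ u in r..s, g u := by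
        have h7 := intervalIntegral.integral_add_adjacent_intervals
          (hgint r r₁ hr0 hrr₁) (hgint r₁ s hr₁0 hr₁s)
        have h8 : 0 ≤ ∫ u in r..r₁, g u :=
          intervalIntegral.integral_nonneg hrr₁
            (fun u hu => hgnn u (le_trans hrT₄ hu.1))
        linarith only [h7, h8]
      linarith only [h4, h6, hintg_le_Γ]
    have hgu₀ : g u₀ ≤ Γ * δe u₀ := by
      have h1 : g u₀ = ρ u₀ * δe u₀ := (div_mul_cancel₀ (g u₀) (hδe_pos u₀).ne').symm
      rw [h1]
      exact mul_le_mul_of_nonneg_right hρΓ (hδe_pos u₀).le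
    have hfu₀ : f u₀ ≤ (Q₂ + Γ) * δe u₀ := by
      simp only [hgdef] at hgu₀
      linarith only [hgu₀]
    -- extract j₀ with high delayed value
    have hex : ∃ j : Fin m, (l-ε) * Real.exp (-(a j u₀ * x (u₀ - σd j u₀))) ≤
        (Q₂ + Γ) * Real.exp (-(a j u₀ * K)) := by
      by_contra hno
      push_neg at hno
      have h1 : ∑ j, p j u₀ * ((l-ε) * Real.exp (-(a j u₀ * x (u₀ - σd j u₀)))) ≤ f u₀ := by
        rw [hfdef]
        apply Finset.sum_le_sum
        intro j _
        have hp0 : 0 < p j u₀ := (hp j).2 u₀ hu₀0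
        have hxτ : l - ε ≤ x (u₀ - τd j u₀) := (le_of_lt (((hdelay u₀ hu₀T).2.2 j).1).1)
        calc p j u₀ * ((l-ε) * Real.exp (-(a j u₀ * x (u₀ - σd j u₀))))
            ≤ p j u₀ * (x (u₀ - τd j u₀) * Real.exp (-(a j u₀ * x (u₀ - σd j u₀)))) := by
              apply mul_le_mul_of_nonneg_left _ hp0.le
              exact mul_le_mul_of_nonneg_right hxτ (Real.exp_pos _).le
          _ = p j u₀ * x (u₀ - τd j u₀) * Real.exp (-(a j u₀ * x (u₀ - σd j u₀))) := by
              ring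
      have h2 : ∑ j, p j u₀ * ((Q₂ + Γ) * Real.exp (-(a j u₀ * K)))
          < ∑ j, p j u₀ * ((l-ε) * Real.exp (-(a j u₀ * x (u₀ - σd j u₀)))) := by
        apply Finset.sum_lt_sum_of_nonempty Finset.univ_nonempty
        intro j _
        exact mul_lt_mul_of_pos_left (hno j) ((hp j).2 u₀ hu₀0)
      have h3 : ∑ j, p j u₀ * ((Q₂ + Γ) * Real.exp (-(a j u₀ * K)))
          = (Q₂ + Γ) * δe u₀ := by
        rw [hδe_eq u₀ hu₀0, hK1 u₀ hu₀0, Finset.mul_sum]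
        exact Finset.sum_congr rfl (fun j _ => by ring)
      rw [h3] at h2
      linarith only [h1, h2, hfu₀]
    obtain ⟨j₀, hj₀⟩ := hex
    set v : ℝ := u₀ - σd j₀ u₀ with hvdef
    set β : ℝ := Γ / (l-ε) with hβdef
    have hβ0 : 0 ≤ β := div_nonneg hΓ0 (by linarith)
    set α : ℝ := a j₀ u₀ with hαdef
    have hαc : c ≤ α := hcle j₀ u₀ hu₀0
    have hαKy : α * (K - x v) ≤ β := by
      have h0 := mul_le_mul_of_nonneg_right hj₀ (Real.exp_pos (α*K)).le
      have e1 : (l-ε) * Real.exp (-(α * x v)) * Real.exp (α*K)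
          = (l-ε) * Real.exp (-(α * x v) + α*K) := by
        rw [Real.exp_add]; ring
      have e2 : (Q₂+Γ) * Real.exp (-(α*K)) * Real.exp (α*K) = (Q₂+Γ) := by
        rw [mul_assoc, ← Real.exp_add]
        have h : -(α*K) + α*K = 0 := by ring
        rw [h, Real.exp_zero, mul_one]
      rw [e1, e2] at h0
      have h3 : β * (l-ε) = Γ := by
        have hne : l - ε ≠ 0 := ne_of_gt (show (0:ℝ) < l - ε by linarith)
        rw [hβdef]; field_simp
      have h4 : (l-ε) * Real.exp (-(α * x v) + α*K) ≤ (l-ε) * (1 + β) := by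
        linarith only [h0, hQl, h3]
      have h5 : Real.exp (-(α * x v) + α*K) ≤ 1 + β :=
        le_of_mul_le_mul_left h4 (by linarith)
      have h6 : 1 + β ≤ Real.exp β := by linarith only [Real.add_one_le_exp β]
      have h8 := Real.exp_le_exp.mp (le_trans h5 h6)
      linarith only [h8]
    have hxvK : K - ε*W ≤ x v := by
      rcases le_or_gt K (x v) with h | h
      · linarith only [h, mul_pos hεpos hWpos]
      · have h5 : c * (K - x v) ≤ α * (K - x v) :=
          mul_le_mul_of_nonneg_right hαc (by linarith)
        have h6 : β ≤ ε*Λ/(l/2) :=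
          div_le_div₀ (mul_nonneg hεpos.le hΛpos.le) hΓΛ (half_pos hlpos) (by linarith)
        have hc0' : c ≠ 0 := hc_pos.ne'
        have hl0' : l ≠ 0 := hlpos.ne'
        have heq : ε*Λ/(l/2) = 2*(ε*Λ/l) := by
          field_simp
        have h7 : c * (ε*W) = 2*(ε*Λ/l) := by
          rw [hWdef]; field_simp
        have h8 : c * (K - x v) ≤ c * (ε*W) := by
          rw [h7]; rw [heq] at h6; linarith only [h5, hαKy, h6]
        have h9 := le_of_mul_le_mul_left h8 hc_pos
        linarith only [h9]
    -- window bound and position of v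
    have hvu₀ : v ≤ u₀ := by
      have h1 := ((hdel j₀).2.2.1 u₀ hu₀0).2
      rw [hvdef]; linarith
    have hvT : T₀ + 1 ≤ v := by
      have h1 := (hτub j₀ u₀ hu₀0).2
      rw [hvdef]; linarith [hu₀T]
    have hv0 : (0:ℝ) ≤ v := by linarith
    have hFvu₀ : F u₀ - F v ≤ B := by
      rw [hFsub v u₀]
      have h1 : ∀ u ∈ Icc v u₀, δe u ≤ ∑ k, p k u := by
        intro u hu
        have hu0 : (0:ℝ) ≤ u := le_trans hv0 hu.1
        rw [hδe_eq u hu0, hK1 u hu0]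
        apply Finset.sum_le_sum
        intro k _
        have h2 : Real.exp (-(a k u * K)) ≤ 1 := by
          rw [Real.exp_le_one_iff]
          have h9 : 0 ≤ a k u * K :=
            mul_nonneg (by linarith only [hcle k u hu0, hc_pos]) hKpos.le
          linarith only [h9]
        calc p k u * Real.exp (-(a k u * K)) ≤ p k u * 1 :=
            mul_le_mul_of_nonneg_left h2 ((hp k).2 u hu0).le
          _ = p k u := mul_one _
      have h3 : ∫ u in v..u₀, δe u ≤ ∫ u in v..u₀, (∑ k, p k u) := by
        apply intervalIntegral.integral_mono_on hvu₀
          (hδe_cont.intervalIntegrable _ _) _ h1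
        apply ContinuousOn.intervalIntegrable
        rw [uIcc_of_le hvu₀]
        apply (continuousOn_finset_sum Finset.univ (fun k _ => (hp k).1)).mono
        intro u hu
        exact le_trans hv0 hu.1
      have h4 := hBle j₀ u₀ hu₀0
      rw [← hvdef] at h4
      linarith only [h3, h4]
    have hFvr : F r + 1 ≤ F v := by
      have h1 : F r₁ ≤ F u₀ := hFmono hu₀mem.1
      rw [hFr₁] at h1
      rw [hFr]
      linarith only [h1, hFvu₀, hR₂def]
    have hrv : r ≤ v := by
      by_contra h
      push_neg at h
      have h1 := hFmono h.le
      linarith only [h1, hFvr]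
    have hvs : v ≤ s := le_trans hvu₀ hu₀s
    obtain ⟨w, hwmem, hFw⟩ : ∃ w ∈ Icc r v, F w = F v - 1 := by
      have h1 : F v - 1 ∈ Icc (F r) (F v) := ⟨by linarith, by linarith⟩
      obtain ⟨w, h2, h3⟩ := intermediate_value_Icc hrv hFc.continuousOn h1
      exact ⟨w, h2, h3⟩
    have hw1 : (1:ℝ) ≤ w := le_trans hr1 hwmem.1
    have hw0 : (0:ℝ) ≤ w := by linarith
    have hwv : w ≤ v := hwmem.2
    have hEwv : E w = E v * Real.exp (-1) := by
      simp only [hEdef]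
      rw [← Real.exp_add, hFw]
      norm_num [sub_eq_add_neg]
    -- VOC on [w, v] and the upper bound for x v
    have hxvub : x v ≤ (L+ε) * Real.exp (-1) + l * (1 - Real.exp (-1)) + Γ := by
      have h2 : ∀ u : ℝ, f u * E u = Q₂ * (δe u * E u) + g u * E u := by
        intro u; simp only [hgdef]; ring
      have hcg : ∫ u in w..v, f u * E u
          = ∫ u in w..v, (Q₂ * (δe u * E u) + g u * E u) :=
        intervalIntegral.integral_congr (fun u _ => h2 u)
      have h1 : x v * E v - x w * E w
          = Q₂ * (E v - E w) + ∫ u in w..v, g u * E u := by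
        rw [← hVOC w v hw1 hwv, hcg, intervalIntegral.integral_add (f := fun u => Q₂ * (δe u * E u))
          ((continuous_const.mul (hδe_cont.mul hEc)).intervalIntegrable _ _)
          (hgEint w v hw0 hwv),
          intervalIntegral.integral_const_mul, hVOCδ w v]
      have hgEwv : ∫ u in w..v, g u * E u ≤ Γ * E v := by
        have h3 : ∀ u ∈ Icc w v, g u * E u ≤ g u * E v := by
          intro u hu
          exact mul_le_mul_of_nonneg_left (Real.exp_le_exp.mpr (hFmono hu.2))
            (hgnn u (le_trans hrT₄ (le_trans hwmem.1 hu.1)))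
        have h4 : ∫ u in w..v, g u * E u ≤ ∫ u in w..v, g u * E v :=
          intervalIntegral.integral_mono_on hwv (hgEint w v hw0 hwv)
            ((hgint w v hw0 hwv).mul_const _) h3
        rw [intervalIntegral.integral_mul_const] at h4
        have h5 : ∫ u in w..v, g u ≤ Γ := by
          have h6 := intervalIntegral.integral_add_adjacent_intervals
            (hgint r w hr0 hwmem.1) (hgint w v hw0 hwv)
          have h7 := intervalIntegral.integral_add_adjacent_intervals
            (hgint r v hr0 hrv) (hgint v s hv0 hvs)
          have h8 : 0 ≤ ∫ u in r..w, g u :=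
            intervalIntegral.integral_nonneg hwmem.1
              (fun u hu => hgnn u (le_trans hrT₄ hu.1))
          have h9 : 0 ≤ ∫ u in v..s, g u :=
            intervalIntegral.integral_nonneg hvs
              (fun u hu => hgnn u (le_trans hrT₄ (le_trans hrv hu.1)))
          linarith only [h6, h7, h8, h9, hintg_le_Γ]
        linarith only [h4, mul_le_mul_of_nonneg_right h5 (hEpos v).le]
      have hxw : x w ≤ L + ε := by
        have h10 := ((hdelay w (le_trans hT₄T (le_trans hrT₄ hwmem.1))).2.1).2
        linarith only [h10]
      have h11 : x v * E v ≤ (L+ε) * E w + l * (E v - E w) + Γ * E v := by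
        have h12 : E w ≤ E v := Real.exp_le_exp.mpr (hFmono hwv)
        have h13 : Q₂ * (E v - E w) ≤ l * (E v - E w) := by
          apply mul_le_mul_of_nonneg_right _ (by linarith)
          linarith only [hQl, hεpos]
        have h14 : x w * E w ≤ (L+ε) * E w :=
          mul_le_mul_of_nonneg_right hxw (hEpos w).le
        linarith only [h1, hgEwv, h13, h14]
      rw [hEwv] at h11
      have h15 : x v * E v ≤ ((L+ε) * Real.exp (-1) + l*(1 - Real.exp (-1)) + Γ) * E v := by
        linarith only [h11]
      exact le_of_mul_le_mul_right h15 (hEpos v)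
    -- final contradiction
    have hfin1 : Δ ≤ ε + ε*Λ + ε*W := by
      rw [hΔdef]
      have h16 := mul_le_mul_of_nonneg_left hexp1.le hεpos.le
      nlinarith only [hxvub, hxvK, hΓΛ, h16, hLK]
    rw [hPdef] at hεP
    nlinarith only [hεP, hfin1, mul_pos hεpos hΛpos, mul_pos hεpos hWpos, hεpos, hΔpos]
  exact ⟨not_le.mp hcaseI, not_le.mp hcaseII⟩
end
end

section
/- Let K > 0, a⁺ > 0, define g(x) = e^{a⁺(K−x)} for x > 0, and let θ₀ ∈ (0,1) satisfy a⁺K(θ₀^{−1} − 1) ≤ 1. Then: (i) (1−θ₀) g(θ₀ K) < 1; (ii) the function h(x) = θ₀K / (1 − g(x)(1−θ₀)) is well defined (its denominator is positive) and strictly decreasing on I = [θ₀K, ∞); (iii) h maps I into I; (iv) h(K) = K and K is the unique fixed point of h on I; (v) |h'(K)| ≤ 1; and (vi) the Schwarzian derivative Sh(x) = h'''(x)/h'(x) − (3/2)(h''(x)/h'(x))² equals −(a⁺)²/2 < 0 for all x ∈ I. -/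
open Real Set

noncomputable section

private lemma expAux_hasDerivAt (a K x : ℝ) :
    HasDerivAt (fun y => Real.exp (a * (K - y))) (-a * Real.exp (a * (K - x))) x := by
  have h1 : HasDerivAt (fun y : ℝ => a * (K - y)) (-a) x := by
    simpa using ((hasDerivAt_id x).const_sub K).const_mul a
  convert h1.exp using 1
  ring

/-- properties of the auxiliary function `h` built from `g(x) = e^{a⁺(K-x)}`:
well-definedness, monotonicity, invariance of `I = [θ₀K, ∞)`, unique fixed point `K`,
`|h'(K)| ≤ 1` and constant negative Schwarzian derivative `Sh = -(a⁺)²/2 < 0`. -/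
theorem auxiliary_map_properties
    (K aplus θ₀ : ℝ) (hK : 0 < K) (ha : 0 < aplus)
    (hθ : θ₀ ∈ Ioo (0:ℝ) 1)
    (hcond : aplus * K * (θ₀⁻¹ - 1) ≤ 1)
    (g h : ℝ → ℝ)
    (hg : ∀ x, g x = Real.exp (aplus * (K - x)))
    (hh : ∀ x, h x = θ₀ * K / (1 - g x * (1 - θ₀))) :
    (1 - θ₀) * g (θ₀ * K) < 1 ∧
    (∀ x ∈ Ici (θ₀ * K), 0 < 1 - g x * (1 - θ₀)) ∧
    StrictAntiOn h (Ici (θ₀ * K)) ∧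
    (∀ x ∈ Ici (θ₀ * K), h x ∈ Ici (θ₀ * K)) ∧
    h K = K ∧
    (∀ x ∈ Ici (θ₀ * K), h x = x → x = K) ∧
    |deriv h K| ≤ 1 ∧
    (∀ x ∈ Ici (θ₀ * K),
      deriv (deriv (deriv h)) x / deriv h x
        - (3 / 2) * (deriv (deriv h) x / deriv h x) ^ 2 = -(aplus ^ 2) / 2) ∧
    -(aplus ^ 2) / 2 < 0 := by
  obtain ⟨hθ0, hθ1⟩ := hθ
  have hθK : 0 < θ₀ * K := mul_pos hθ0 hK
  have hu : 0 < 1 - θ₀ := by linarith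
  set E : ℝ → ℝ := fun x => Real.exp (aplus * (K - x)) with hEdef
  set D : ℝ → ℝ := fun x => 1 - E x * (1 - θ₀) with hDdef
  have hEpos : ∀ x, 0 < E x := fun x => Real.exp_pos _
  have hhD : ∀ x, h x = θ₀ * K / D x := fun x => by rw [hh x, hg x]
  have hEanti : ∀ {x y : ℝ}, x < y → E y < E x := by
    intro x y hxy
    exact Real.exp_lt_exp.mpr (by nlinarith)
  have hEmono : ∀ {x y : ℝ}, x ≤ y → E y ≤ E x := by
    intro x y hxy
    exact Real.exp_le_exp.mpr (by nlinarith)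
  -- key consequence of hcond
  have ht : aplus * K * (1 - θ₀) ≤ θ₀ := by
    have e1 : θ₀⁻¹ - 1 = (1 - θ₀) / θ₀ := by field_simp
    rw [e1, ← mul_div_assoc, div_le_one hθ0] at hcond
    exact hcond
  -- part 1
  have hp1 : (1 - θ₀) * E (θ₀ * K) < 1 := by
    have h1 : E (θ₀ * K) ≤ Real.exp θ₀ := by
      have h0 : aplus * (K - θ₀ * K) ≤ θ₀ := by nlinarith [ht]
      exact Real.exp_le_exp.mpr h0
    have h2 : (1 - θ₀) * Real.exp θ₀ < 1 := by
      have h3 := Real.add_one_lt_exp (x := -θ₀) (by linarith)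
      have h4 : Real.exp (-θ₀) * Real.exp θ₀ = 1 := by
        rw [← Real.exp_add]; simp
      nlinarith [Real.exp_pos θ₀]
    nlinarith [hEpos (θ₀ * K), Real.exp_pos θ₀]
  -- part 2
  have hp2 : ∀ x ∈ Ici (θ₀ * K), 0 < D x := by
    intro x hx
    have hmx : E x ≤ E (θ₀ * K) := hEmono (mem_Ici.mp hx)
    have hEx := hEpos x
    simp only [hDdef]
    nlinarith
  have hDne : ∀ x ∈ Ici (θ₀ * K), D x ≠ 0 := fun x hx => (hp2 x hx).ne'
  -- part 3
  have hp3 : StrictAntiOn h (Ici (θ₀ * K)) := by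
    intro x hx y hy hxy
    rw [hhD x, hhD y]
    have hdx := hp2 x hx
    have hlt : D x < D y := by
      simp only [hDdef]
      nlinarith [hEanti hxy]
    exact div_lt_div_of_pos_left hθK hdx hlt
  -- part 4
  have hp4 : ∀ x ∈ Ici (θ₀ * K), h x ∈ Ici (θ₀ * K) := by
    intro x hx
    have hdx := hp2 x hx
    rw [mem_Ici, hhD x, le_div_iff₀ hdx]
    have hEx := hEpos x
    have hD1 : D x ≤ 1 := by simp only [hDdef]; nlinarith
    nlinarith
  -- values at K
  have hEK : E K = 1 := by simp [hEdef]
  have hDK : D K = θ₀ := by simp only [hDdef, hEK]; ring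
  have hKmem : K ∈ Ici (θ₀ * K) := by rw [mem_Ici]; nlinarith
  have hp5 : h K = K := by
    rw [hhD K, hDK, mul_comm, mul_div_assoc, div_self hθ0.ne', mul_one]
  -- part 6
  have hp6 : ∀ x ∈ Ici (θ₀ * K), h x = x → x = K := by
    intro x hx hfix
    by_contra hne
    have hdx := hp2 x hx
    rcases lt_or_gt_of_ne hne with hlt | hgt
    · have hDlt : D x < θ₀ := by
        have := hEanti hlt
        simp only [hDdef] at *
        nlinarith
      have hKlt : K < h x := by
        rw [hhD x, lt_div_iff₀ hdx]
        nlinarith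
      rw [hfix] at hKlt
      linarith
    · have hDgt : θ₀ < D x := by
        have := hEanti hgt
        simp only [hDdef] at *
        nlinarith
      have hKgt : h x < K := by
        rw [hhD x, div_lt_iff₀ hdx]
        nlinarith
      rw [hfix] at hKgt
      linarith
  -- derivative machinery
  have hEd : ∀ x, HasDerivAt E (-aplus * E x) x := by
    intro x
    simp only [hEdef]
    exact expAux_hasDerivAt aplus K x
  have hDd : ∀ x, HasDerivAt D (aplus * (1 - θ₀) * E x) x := by
    intro x
    simp only [hDdef]
    have : HasDerivAt (fun x => 1 - E x * (1 - θ₀)) _ x := ((hEd x).mul_const (1 - θ₀)).const_sub 1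
    convert this using 1
    ring
  set c : ℝ := θ₀ * K * aplus * (1 - θ₀) with hc
  set h1 : ℝ → ℝ := fun x => -c * E x / D x ^ 2 with hh1
  set h2 : ℝ → ℝ := fun x => c * aplus * (E x * D x + 2 * (1 - θ₀) * E x ^ 2) / D x ^ 3 with hh2
  set h3 : ℝ → ℝ := fun x =>
    -(c * aplus ^ 2) * E x * (D x ^ 2 + 6 * (1 - θ₀) * E x * D x + 6 * (1 - θ₀) ^ 2 * E x ^ 2)
      / D x ^ 4 with hh3
  have hder1 : ∀ x, D x ≠ 0 → HasDerivAt h (h1 x) x := by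
    intro x hne
    have hfun : h = fun y => θ₀ * K / D y := funext hhD
    rw [hfun]
    have hx : HasDerivAt (fun y => θ₀ * K / D y) _ x := (hasDerivAt_const x (θ₀ * K)).div (hDd x) hne
    convert hx using 1
    simp only [hh1, hc]
    field_simp
    ring
  have hder2 : ∀ x, D x ≠ 0 → HasDerivAt h1 (h2 x) x := by
    intro x hne
    rw [hh1]
    have hnum := (hEd x).const_mul (-c)
    have hden := (hDd x).pow 2
    have hdiv : HasDerivAt (fun x => -c * E x / D x ^ 2) _ x := hnum.div hden (pow_ne_zero 2 hne)
    convert hdiv using 1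
    simp only [hh2]
    push_cast
    field_simp
    ring
  have hder3 : ∀ x, D x ≠ 0 → HasDerivAt h2 (h3 x) x := by
    intro x hne
    rw [hh2]
    have hnum := (((hEd x).mul (hDd x)).add
      (((hEd x).pow 2).const_mul (2 * (1 - θ₀)))).const_mul (c * aplus)
    have hden := (hDd x).pow 3
    have hdiv : HasDerivAt (fun x => c * aplus * (E x * D x + 2 * (1 - θ₀) * E x ^ 2) / D x ^ 3) _ x :=
      hnum.div hden (pow_ne_zero 3 hne)
    convert hdiv using 1
    simp only [hh3, Pi.add_apply, Pi.mul_apply, Pi.pow_apply]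
    push_cast
    field_simp
    ring
  have hDc : Continuous D := by
    simp only [hDdef, hEdef]
    fun_prop
  have hUopen : IsOpen {x : ℝ | D x ≠ 0} := isOpen_ne.preimage hDc
  have hd1 : ∀ x, D x ≠ 0 → deriv h x = h1 x := fun x hx => (hder1 x hx).deriv
  have hd2 : ∀ x, D x ≠ 0 → deriv (deriv h) x = h2 x := by
    intro x hx
    have hev : deriv h =ᶠ[nhds x] h1 := by
      filter_upwards [hUopen.mem_nhds hx] with y hy using hd1 y hy
    rw [hev.deriv_eq]
    exact (hder2 x hx).deriv
  have hd3 : ∀ x, D x ≠ 0 → deriv (deriv (deriv h)) x = h3 x := by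
    intro x hx
    have hev : deriv (deriv h) =ᶠ[nhds x] h2 := by
      filter_upwards [hUopen.mem_nhds hx] with y hy using hd2 y hy
    rw [hev.deriv_eq]
    exact (hder3 x hx).deriv
  -- part 7
  have hDKne : D K ≠ 0 := hDne K hKmem
  have hp7 : |deriv h K| ≤ 1 := by
    have hdK : deriv h K = -(aplus * K * (1 - θ₀) / θ₀) := by
      rw [hd1 K hDKne]
      simp only [hh1, hc, hEK, hDK]
      field_simp
    rw [hdK, abs_neg, abs_of_nonneg (div_nonneg (mul_pos (mul_pos ha hK) hu).le hθ0.le), div_le_one hθ0]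
    exact ht
  -- part 8
  have hp8 : ∀ x ∈ Ici (θ₀ * K),
      deriv (deriv (deriv h)) x / deriv h x
        - (3 / 2) * (deriv (deriv h) x / deriv h x) ^ 2 = -(aplus ^ 2) / 2 := by
    intro x hx
    have hne := hDne x hx
    have hE0 := (hEpos x).ne'
    rw [hd1 x hne, hd2 x hne, hd3 x hne]
    simp only [hh1, hh2, hh3, hc]
    field_simp
    ring
  refine ⟨by rw [hg]; exact hp1, ?_, hp3, hp4, hp5, hp6, hp7, hp8, by nlinarith [sq_nonneg aplus]⟩
  intro x hx
  have := hp2 x hx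
  simp only [hDdef] at this
  rw [hg]
  exact this
end
end

section
/- Consider equation (*) in which all the delays σ_j are identically zero, i.e. x'(t) = ∑_{j=1}^m p_j(t) x(t−τ_j(t)) e^{−a_j(t) x(t)} − δ(t) x(t), and assume (A0), (A1), (A2), (A3). Then every positive solution is a global attractor: for any two positive solutions x₁ and x₂, lim_{t→∞} (x₁(t) − x₂(t)) = 0. -/
open Real Filter MeasureTheory Set Topology

set_option maxHeartbeats 1000000

noncomputable section

lemma Nich.deriv_nonneg_left {x : ℝ → ℝ} {d t a : ℝ} (hd : HasDerivAt x d t)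
    (ha : a < t) (h : ∀ u ∈ Ico a t, x u ≤ x t) : 0 ≤ d := by
  have hd' : HasDerivWithinAt x d (Iio t) t := hd.hasDerivWithinAt
  rw [hasDerivWithinAt_iff_tendsto_slope' (notMem_Iio.mpr le_rfl)] at hd'
  refine ge_of_tendsto hd' ?_
  filter_upwards [Ioo_mem_nhdsLT_of_mem (Set.mem_Ioc.mpr ⟨ha, le_rfl⟩)] with u hu
  rw [slope_def_field]
  refine div_nonneg_of_nonpos ?_ ?_
  · exact sub_nonpos.mpr (h u ⟨hu.1.le, hu.2⟩)
  · exact sub_nonpos.mpr hu.2.le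

lemma Nich.deriv_nonpos_left {x : ℝ → ℝ} {d t a : ℝ} (hd : HasDerivAt x d t)
    (ha : a < t) (h : ∀ u ∈ Ico a t, x t ≤ x u) : d ≤ 0 := by
  have := Nich.deriv_nonneg_left (x := fun s => -x s) (d := -d) (t := t) (a := a)
    hd.neg ha (fun u hu => neg_le_neg (h u hu))
  linarith

lemma Nich.ftc (δ : ℝ → ℝ) (hδ : ContinuousOn δ (Ici 0)) {t : ℝ} (ht : 0 < t) :
    HasDerivAt (fun u => ∫ s in (0:ℝ)..u, δ s) (δ t) t := by
  have hsub : uIcc (0:ℝ) t ⊆ Ici 0 := by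
    rw [uIcc_of_le ht.le]; exact Icc_subset_Ici_self
  have hint : IntervalIntegrable δ volume 0 t := (hδ.mono hsub).intervalIntegrable
  have hcont : ∀ u ∈ Ioi (0:ℝ), ContinuousAt δ u := fun u hu =>
    hδ.continuousAt (Ici_mem_nhds hu)
  exact intervalIntegral.integral_hasDerivAt_right hint
    (ContinuousAt.stronglyMeasurableAtFilter isOpen_Ioi hcont t ht)
    (hcont t ht)

open Real Filter MeasureTheory Set

set_option maxHeartbeats 1000000

noncomputable section

namespace Nich

variable {m : ℕ} {p a : Fin m → ℝ → ℝ} {δ : ℝ → ℝ} {τd : Fin m → ℝ → ℝ} {τ : ℝ}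

lemma tau_nonneg (hm : 0 < m) (hτ : IsMaxDelay m τd (fun _ _ => 0) τ) : 0 ≤ τ :=
  hτ.1 ⟨⟨0, hm⟩, 0, le_rfl, Or.inr rfl⟩

lemma taud_le (hτ : IsMaxDelay m τd (fun _ _ => 0) τ) (j : Fin m) {t : ℝ} (ht : 0 ≤ t) :
    τd j t ≤ τ :=
  hτ.1 ⟨j, t, ht, Or.inl rfl⟩

lemma sol_hasDerivAt (hx : IsPosSol m p a δ τd (fun _ _ => 0) τ x) {t : ℝ} (ht : 0 < t) :
    HasDerivAt x ((∑ j, p j t * x (t - τd j t) * Real.exp (-(a j t * x t))) - δ t * x t) t := by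
  have h := hx.2.2.2 t ht.le
  simp only [sub_zero] at h
  exact h.hasDerivAt (Ici_mem_nhds ht)

lemma sum_nonneg_of (hA0 : HypA0 m p a δ τd (fun _ _ => 0)) {x : ℝ → ℝ} {t : ℝ} (ht : 0 ≤ t)
    (hxd : ∀ j : Fin m, 0 ≤ x (t - τd j t)) :
    0 ≤ ∑ j, p j t * x (t - τd j t) * Real.exp (-(a j t * x t)) := by
  refine Finset.sum_nonneg fun j _ => ?_
  have hp := (hA0.1 j).2 t ht
  have := Real.exp_pos (-(a j t * x t))
  have := hxd j
  positivity

lemma sol_pos (hm : 0 < m) (hA0 : HypA0 m p a δ τd (fun _ _ => 0))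
    (hτ : IsMaxDelay m τd (fun _ _ => 0) τ) {x : ℝ → ℝ}
    (hx : IsPosSol m p a δ τd (fun _ _ => 0) τ x) :
    ∀ t, 0 ≤ t → 0 < x t := by
  have hτ0 : 0 ≤ τ := tau_nonneg hm hτ
  have hcx : ContinuousOn x (Ici (0:ℝ)) := hx.1.mono (Ici_subset_Ici.mpr (by linarith))
  by_contra hcon
  push_neg at hcon
  obtain ⟨s, hs0, hxs⟩ := hcon
  set S : Set ℝ := Ici 0 ∩ x ⁻¹' (Iic 0) with hS
  have hclosed : IsClosed S := hcx.preimage_isClosed_of_isClosed isClosed_Ici isClosed_Iic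
  have hne : S.Nonempty := ⟨s, hs0, hxs⟩
  have hbdd : BddBelow S := ⟨0, fun u hu => hu.1⟩
  set t₀ := sInf S with ht₀def
  have ht₀S : t₀ ∈ S := hclosed.csInf_mem hne hbdd
  have ht₀0 : 0 ≤ t₀ := ht₀S.1
  have ht₀pos : 0 < t₀ := by
    rcases ht₀0.lt_or_eq with h | h
    · exact h
    · exfalso
      have h2 : x t₀ ≤ 0 := ht₀S.2
      rw [← h] at h2
      exact absurd hx.2.2.1 (not_lt.mpr h2)
  have hpre : ∀ u, 0 ≤ u → u < t₀ → 0 < x u := by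
    intro u hu hut
    by_contra hneg
    have : u ∈ S := ⟨hu, not_lt.mp hneg⟩
    exact absurd (csInf_le hbdd this) (not_le.mpr hut)
  have hnn : ∀ u, -τ ≤ u → u < t₀ → 0 ≤ x u := by
    intro u hu hut
    rcases lt_or_ge u 0 with h | h
    · exact hx.2.1 u ⟨hu, h⟩
    · exact (hpre u h hut).le
  obtain ⟨uK, huK, hKmax⟩ := isCompact_Icc.exists_isMaxOn (nonempty_Icc.mpr ht₀0)
      ((hA0.2.2.1.1).mono Icc_subset_Ici_self)
  set K := δ uK with hKdef
  set y : ℝ → ℝ := fun u => x u * Real.exp (K * u) with hy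
  have hyd : ∀ u ∈ Ioo (0:ℝ) t₀, HasDerivAt y
      (((∑ j, p j u * x (u - τd j u) * Real.exp (-(a j u * x u))) - δ u * x u)
        * Real.exp (K * u) + x u * (Real.exp (K * u) * (K * 1))) u := by
    intro u hu
    have hxd := sol_hasDerivAt hx hu.1
    have hexp : HasDerivAt (fun v : ℝ => Real.exp (K * v)) (Real.exp (K * u) * (K * 1)) u :=
      HasDerivAt.exp ((hasDerivAt_id u).const_mul K)
    exact hxd.mul hexp
  have hymono : MonotoneOn y (Icc 0 t₀) := by
    apply monotoneOn_of_deriv_nonneg (convex_Icc _ _)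
    · exact (hcx.mono Icc_subset_Ici_self).mul (Continuous.continuousOn (by continuity))
    · rw [interior_Icc]
      intro u hu
      exact (hyd u hu).differentiableAt.differentiableWithinAt
    · rw [interior_Icc]
      intro u hu
      rw [(hyd u hu).deriv]
      have hxu : 0 < x u := hpre u hu.1.le hu.2
      have hδK : δ u ≤ K := hKmax ⟨hu.1.le, hu.2.le⟩
      have hE : (0:ℝ) < Real.exp (K * u) := Real.exp_pos _
      have hSg : 0 ≤ ∑ j, p j u * x (u - τd j u) * Real.exp (-(a j u * x u)) := by
        refine sum_nonneg_of hA0 hu.1.le fun j => ?_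
        have hu0 : 0 < u := hu.1
        have hu2 : u < t₀ := hu.2
        have h1 : τd j u ≤ τ := taud_le hτ j hu.1.le
        have h2 : 0 ≤ τd j u := ((hA0.2.2.2 j).2.2.1 u hu.1.le).1
        exact hnn _ (by linarith) (by linarith)
      have hδpos : 0 < δ u := hA0.2.2.1.2 u hu.1.le
      nlinarith [mul_nonneg hSg hE.le, mul_le_mul_of_nonneg_left hδK (mul_pos hxu hE).le]
  have h0 : y 0 ≤ y t₀ := hymono (left_mem_Icc.mpr ht₀0) (right_mem_Icc.mpr ht₀0) ht₀0
  have hy0 : 0 < y 0 := by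
    simp only [hy, mul_zero, Real.exp_zero, mul_one]
    exact hx.2.2.1
  have hyt : y t₀ ≤ 0 :=
    mul_nonpos_iff.mpr (Or.inr ⟨ht₀S.2, (Real.exp_pos _).le⟩)
  linarith

lemma sol_nonneg (hm : 0 < m) (hA0 : HypA0 m p a δ τd (fun _ _ => 0))
    (hτ : IsMaxDelay m τd (fun _ _ => 0) τ) {x : ℝ → ℝ}
    (hx : IsPosSol m p a δ τd (fun _ _ => 0) τ x) :
    ∀ t, -τ ≤ t → 0 ≤ x t := by
  intro t ht
  rcases lt_or_ge t 0 with h | h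
  · exact hx.2.1 t ⟨ht, h⟩
  · exact (sol_pos hm hA0 hτ hx t h).le


lemma psum_pos (hm : 0 < m) (hA0 : HypA0 m p a δ τd (fun _ _ => 0)) {t : ℝ} (ht : 0 ≤ t) :
    0 < ∑ j, p j t :=
  Finset.sum_pos (fun j _ => (hA0.1 j).2 t ht) ⟨⟨0, hm⟩, Finset.mem_univ _⟩

lemma a_bounds (hm : 0 < m) (hA0 : HypA0 m p a δ τd (fun _ _ => 0)) :
    ∃ c C : ℝ, 0 < c ∧ 0 < C ∧ ∀ j t, 0 ≤ t → c ≤ a j t ∧ a j t ≤ C := by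
  haveI : Nonempty (Fin m) := ⟨⟨0, hm⟩⟩
  have hne : (Finset.univ : Finset (Fin m)).Nonempty := Finset.univ_nonempty
  choose hacont ca Ca h0 hb using hA0.2.1
  refine ⟨Finset.univ.inf' hne ca, Finset.univ.sup' hne Ca, ?_, ?_, ?_⟩
  · rw [Finset.lt_inf'_iff]
    exact fun j _ => h0 j
  · obtain ⟨j⟩ := (inferInstance : Nonempty (Fin m))
    have h1 := (hb j 0 le_rfl).1
    have h2 := (hb j 0 le_rfl).2
    have := h0 j
    exact lt_of_lt_of_le (by linarith) (Finset.le_sup' Ca (Finset.mem_univ j))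
  · intro j t ht
    exact ⟨le_trans (Finset.inf'_le ca (Finset.mem_univ j)) (hb j t ht).1,
      le_trans (hb j t ht).2 (Finset.le_sup' Ca (Finset.mem_univ j))⟩

lemma ratio_bounds (hm : 0 < m) (hA0 : HypA0 m p a δ τd (fun _ _ => 0)) (hA1 : HypA1 m p δ) :
    ∃ b C T : ℝ, 1 < b ∧ 0 < C ∧ 1 ≤ T ∧
      ∀ t, T ≤ t → b * δ t ≤ (∑ j, p j t) ∧ (∑ j, p j t) ≤ C * δ t := by
  obtain ⟨b, hb1, hbl⟩ := exists_between hA1.1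
  have hbddb : Filter.IsBoundedUnder (· ≥ ·) Filter.atTop (fun t => (∑ j, p j t) / δ t) := by
    refine ⟨0, ?_⟩
    rw [Filter.eventually_map]
    filter_upwards [eventually_ge_atTop (0:ℝ)] with t ht
    exact div_nonneg (psum_pos hm hA0 ht).le (hA0.2.2.1.2 t ht).le
  have hlow : ∀ᶠ t in atTop, b < (∑ j, p j t) / δ t :=
    Filter.eventually_lt_of_lt_liminf hbl hbddb
  obtain ⟨C0, hC0⟩ := hA1.2
  rw [Filter.eventually_map] at hC0
  have hcomb := (hlow.and hC0).and (eventually_ge_atTop (1:ℝ))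
  rw [Filter.eventually_atTop] at hcomb
  obtain ⟨T0, hT0⟩ := hcomb
  refine ⟨b, max C0 1, max T0 1, hb1, lt_of_lt_of_le one_pos (le_max_right _ _),
    le_max_right _ _, ?_⟩
  intro t ht
  have h1 : T0 ≤ t := le_trans (le_max_left _ _) ht
  obtain ⟨⟨hl, hu⟩, ht1⟩ := hT0 t h1
  have ht0 : (0:ℝ) ≤ t := by linarith
  have hδ : 0 < δ t := hA0.2.2.1.2 t ht0
  constructor
  · rw [lt_div_iff₀ hδ] at hl
    exact (mul_comm b (δ t) ▸ hl.le)
  · rw [div_le_iff₀ hδ] at hu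
    calc (∑ j, p j t) ≤ C0 * δ t := hu
      _ ≤ max C0 1 * δ t := by
          apply mul_le_mul_of_nonneg_right (le_max_left _ _) hδ.le

lemma sol_upper (hm : 0 < m) (hA0 : HypA0 m p a δ τd (fun _ _ => 0))
    (hτ : IsMaxDelay m τd (fun _ _ => 0) τ) (hA1 : HypA1 m p δ) {x : ℝ → ℝ}
    (hx : IsPosSol m p a δ τd (fun _ _ => 0) τ x) :
    ∃ K : ℝ, ∀ t, -τ ≤ t → x t ≤ K := by
  by_contra hcon
  push_neg at hcon
  obtain ⟨c, C, hc0, hC0a, hab⟩ := a_bounds hm hA0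
  obtain ⟨b, C', T, hb1, hC'0, hT1, hbd⟩ := ratio_bounds hm hA0 hA1
  have hτ0 : 0 ≤ τ := tau_nonneg hm hτ
  obtain ⟨uB, huB, hBmax⟩ := isCompact_Icc.exists_isMaxOn
    (nonempty_Icc.mpr (by linarith : -τ ≤ T))
    (hx.1.mono (Icc_subset_Ici_self))
  set B := x uB with hBdef
  set Λ : ℝ := max B (Real.log C' / c) + 1 with hΛdef
  have hΛB : B < Λ := lt_of_le_of_lt (le_max_left _ _) (lt_add_one _)
  have hΛlog : Real.log C' / c < Λ := lt_of_le_of_lt (le_max_right _ _) (lt_add_one _)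
  obtain ⟨s, hsτ, hsΛ⟩ := hcon Λ
  have hsT : T < s := by
    by_contra h
    push_neg at h
    have hle : x s ≤ B := hBmax ⟨hsτ, h⟩
    linarith
  set W : Set ℝ := Icc T s ∩ x ⁻¹' (Ici Λ) with hWdef
  have hWclosed : IsClosed W :=
    (hx.1.mono (subset_trans Icc_subset_Ici_self (Ici_subset_Ici.mpr (by linarith)))).preimage_isClosed_of_isClosed
      isClosed_Icc isClosed_Ici
  have hWne : W.Nonempty := ⟨s, ⟨hsT.le, le_rfl⟩, hsΛ.le⟩
  have hWbdd : BddBelow W := ⟨T, fun u hu => hu.1.1⟩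
  set t' := sInf W with ht'def
  have ht'W : t' ∈ W := hWclosed.csInf_mem hWne hWbdd
  have ht'T : T ≤ t' := ht'W.1.1
  have hxt' : Λ ≤ x t' := ht'W.2
  have hpre : ∀ u, T ≤ u → u < t' → x u < Λ := by
    intro u hTu hut
    by_contra h
    push_neg at h
    have : u ∈ W := ⟨⟨hTu, le_trans hut.le ht'W.1.2⟩, h⟩
    exact absurd (csInf_le hWbdd this) (not_le.mpr hut)
  have ht'T' : T < t' := by
    rcases eq_or_lt_of_le ht'T with h | h
    · exfalso
      have hxT : x T ≤ B := hBmax ⟨by linarith, le_rfl⟩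
      rw [← h] at hxt'
      linarith
    · exact h
  have hall : ∀ u, -τ ≤ u → u ≤ t' → x u ≤ x t' := by
    intro u hu hut
    rcases eq_or_lt_of_le hut with h | h
    · rw [h]
    · rcases le_or_gt u T with h2 | h2
      · exact le_trans (hBmax ⟨hu, h2⟩) (by linarith)
      · exact le_trans (hpre u h2.le h).le hxt'
  have hd := sol_hasDerivAt hx (lt_of_lt_of_le (by linarith : (0:ℝ) < T) ht'T)
  have hd0 := deriv_nonneg_left hd ht'T'
    (fun u hu => hall u (by have := hu.1; linarith) hu.2.le)
  set X := x t' with hXdef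
  have hX0 : 0 < X := sol_pos hm hA0 hτ hx t' (by linarith)
  have hterm : ∀ j : Fin m,
      p j t' * x (t' - τd j t') * Real.exp (-(a j t' * X)) ≤
        p j t' * X * Real.exp (-(c * X)) := by
    intro j
    have hp := (hA0.1 j).2 t' (by linarith)
    have h1 : τd j t' ≤ τ := taud_le hτ j (by linarith)
    have h2 : 0 ≤ τd j t' := ((hA0.2.2.2 j).2.2.1 t' (by linarith)).1
    have hxd : x (t' - τd j t') ≤ X := hall _ (by linarith) (by linarith)
    have hea : Real.exp (-(a j t' * X)) ≤ Real.exp (-(c * X)) := by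
      apply Real.exp_le_exp.mpr
      have := (hab j t' (by linarith)).1
      nlinarith
    calc p j t' * x (t' - τd j t') * Real.exp (-(a j t' * X))
        ≤ p j t' * X * Real.exp (-(a j t' * X)) :=
          mul_le_mul_of_nonneg_right (mul_le_mul_of_nonneg_left hxd hp.le) (Real.exp_pos _).le
      _ ≤ p j t' * X * Real.exp (-(c * X)) :=
          mul_le_mul_of_nonneg_left hea (by positivity)
  have hsum : (∑ j, p j t' * x (t' - τd j t') * Real.exp (-(a j t' * X))) ≤
      (∑ j, p j t') * X * Real.exp (-(c * X)) := by
    rw [Finset.sum_mul, Finset.sum_mul]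
    exact Finset.sum_le_sum fun j _ => hterm j
  have hδ : 0 < δ t' := hA0.2.2.1.2 t' (by linarith)
  have hup : (∑ j, p j t') ≤ C' * δ t' := (hbd t' ht'T).2
  have hexpneg : (0:ℝ) < Real.exp (-(c * X)) := Real.exp_pos _
  have h1 : δ t' * X ≤ (∑ j, p j t') * X * Real.exp (-(c * X)) := le_trans (by linarith) hsum
  have h2 : δ t' ≤ (∑ j, p j t') * Real.exp (-(c * X)) := by
    have := (mul_le_mul_iff_of_pos_right hX0).mp (by linarith [h1] : δ t' * X ≤ (∑ j, p j t') * Real.exp (-(c * X)) * X)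
    exact this
  have h3 : δ t' ≤ C' * δ t' * Real.exp (-(c * X)) :=
    le_trans h2 (mul_le_mul_of_nonneg_right hup hexpneg.le)
  have h4 : Real.exp (c * X) ≤ C' := by
    have hE : (0:ℝ) < Real.exp (c * X) := Real.exp_pos _
    have hinv : Real.exp (-(c * X)) * Real.exp (c * X) = 1 := by
      rw [← Real.exp_add]; simp
    have h3' : 1 ≤ C' * Real.exp (-(c * X)) := by
      rw [← mul_le_mul_iff_of_pos_right hδ, one_mul]
      calc δ t' ≤ C' * δ t' * Real.exp (-(c * X)) := h3
        _ = C' * Real.exp (-(c * X)) * δ t' := by ring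
    calc Real.exp (c * X) = Real.exp (c * X) * 1 := (mul_one _).symm
      _ ≤ Real.exp (c * X) * (C' * Real.exp (-(c * X))) :=
          mul_le_mul_of_nonneg_left h3' hE.le
      _ = C' * (Real.exp (-(c * X)) * Real.exp (c * X)) := by ring
      _ = C' := by rw [hinv, mul_one]
  have h5 : c * X ≤ Real.log C' := by
    have := Real.log_le_log (Real.exp_pos _) h4
    rwa [Real.log_exp] at this
  have h6 : X ≤ Real.log C' / c := (le_div_iff₀ hc0).mpr (by linarith)
  exact absurd (le_trans hxt' h6) (not_le.mpr hΛlog)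


lemma sol_lower (hm : 0 < m) (hA0 : HypA0 m p a δ τd (fun _ _ => 0))
    (hτ : IsMaxDelay m τd (fun _ _ => 0) τ) (hA1 : HypA1 m p δ) {x : ℝ → ℝ}
    (hx : IsPosSol m p a δ τd (fun _ _ => 0) τ x) :
    ∃ ε T₂ : ℝ, 0 < ε ∧ 1 ≤ T₂ ∧ ∀ t, T₂ ≤ t → ε ≤ x t := by
  obtain ⟨c, C, hc0, hC0, hab⟩ := a_bounds hm hA0
  obtain ⟨b, C', T, hb1, hC'0, hT1, hbd⟩ := ratio_bounds hm hA0 hA1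
  have hτ0 : 0 ≤ τ := tau_nonneg hm hτ
  obtain ⟨um, hum, hmmin⟩ := isCompact_Icc.exists_isMinOn
    (nonempty_Icc.mpr (by linarith : T ≤ T + τ))
    (hx.1.mono (subset_trans Icc_subset_Ici_self (Ici_subset_Ici.mpr (by linarith))))
  set mm := x um with hmmdef
  have hmm0 : 0 < mm := sol_pos hm hA0 hτ hx um (by have := hum.1; linarith)
  have hlnb : 0 < Real.log b := Real.log_pos hb1
  set lam : ℝ := min mm (Real.log b / C) / 2 with hlamdef
  have hlam0 : 0 < lam := by
    have : 0 < min mm (Real.log b / C) := lt_min hmm0 (by positivity)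
    positivity
  have hlammm : lam < mm := by
    have h1 : min mm (Real.log b / C) ≤ mm := min_le_left _ _
    have : 0 < min mm (Real.log b / C) := lt_min hmm0 (by positivity)
    rw [hlamdef]; linarith
  have hlamlog : lam < Real.log b / C := by
    have h1 : min mm (Real.log b / C) ≤ Real.log b / C := min_le_right _ _
    have : 0 < min mm (Real.log b / C) := lt_min hmm0 (by positivity)
    rw [hlamdef]; linarith
  refine ⟨lam, T, hlam0, hT1, ?_⟩
  by_contra hcon
  push_neg at hcon
  obtain ⟨s, hsT, hslam⟩ := hcon
  set S : Set ℝ := Ici T ∩ x ⁻¹' (Iic lam) with hSdef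
  have hSclosed : IsClosed S :=
    (hx.1.mono (Ici_subset_Ici.mpr (by linarith))).preimage_isClosed_of_isClosed
      isClosed_Ici isClosed_Iic
  have hSne : S.Nonempty := ⟨s, hsT, hslam.le⟩
  have hSbdd : BddBelow S := ⟨T, fun u hu => hu.1⟩
  set t' := sInf S with ht'def
  have ht'S : t' ∈ S := hSclosed.csInf_mem hSne hSbdd
  have ht'T : T ≤ t' := ht'S.1
  have hxt' : x t' ≤ lam := ht'S.2
  have hpre : ∀ u, T ≤ u → u < t' → lam < x u := by
    intro u hTu hut
    by_contra h
    push_neg at h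
    exact absurd (csInf_le hSbdd ⟨hTu, h⟩) (not_le.mpr hut)
  have ht'big : T + τ < t' := by
    rcases lt_or_ge (T + τ) t' with h | h
    · exact h
    · exfalso
      have : mm ≤ x t' := hmmin ⟨ht'T, h⟩
      linarith
  have hd := sol_hasDerivAt hx (by linarith : (0:ℝ) < t')
  have hd0 := deriv_nonpos_left hd (by linarith : T < t')
    (fun u hu => le_trans hxt' (hpre u hu.1 hu.2).le)
  set X := x t' with hXdef
  have hX0 : 0 < X := sol_pos hm hA0 hτ hx t' (by linarith)
  have hdelay : ∀ j : Fin m, X ≤ x (t' - τd j t') := by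
    intro j
    have h1 : τd j t' ≤ τ := taud_le hτ j (by linarith)
    have h2 : 0 ≤ τd j t' := ((hA0.2.2.2 j).2.2.1 t' (by linarith)).1
    rcases eq_or_lt_of_le (by linarith : t' - τd j t' ≤ t') with h | h
    · rw [h]
    · exact le_trans hxt' (hpre _ (by linarith) h).le
  have hterm : ∀ j : Fin m,
      p j t' * X * Real.exp (-(C * X)) ≤
        p j t' * x (t' - τd j t') * Real.exp (-(a j t' * X)) := by
    intro j
    have hp := (hA0.1 j).2 t' (by linarith)
    have hea : Real.exp (-(C * X)) ≤ Real.exp (-(a j t' * X)) := by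
      apply Real.exp_le_exp.mpr
      have := (hab j t' (by linarith)).2
      nlinarith
    calc p j t' * X * Real.exp (-(C * X))
        ≤ p j t' * x (t' - τd j t') * Real.exp (-(C * X)) :=
          mul_le_mul_of_nonneg_right (mul_le_mul_of_nonneg_left (hdelay j) hp.le)
            (Real.exp_pos _).le
      _ ≤ p j t' * x (t' - τd j t') * Real.exp (-(a j t' * X)) := by
          apply mul_le_mul_of_nonneg_left hea
          have := hdelay j
          nlinarith
  have hsum : (∑ j, p j t') * X * Real.exp (-(C * X)) ≤
      ∑ j, p j t' * x (t' - τd j t') * Real.exp (-(a j t' * X)) := by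
    rw [Finset.sum_mul, Finset.sum_mul]
    exact Finset.sum_le_sum fun j _ => hterm j
  have hδ : 0 < δ t' := hA0.2.2.1.2 t' (by linarith)
  have hlo : b * δ t' ≤ (∑ j, p j t') := (hbd t' ht'T).1
  have hexpneg : (0:ℝ) < Real.exp (-(C * X)) := Real.exp_pos _
  have h1 : (∑ j, p j t') * X * Real.exp (-(C * X)) ≤ δ t' * X := le_trans hsum (by linarith)
  have h2 : (∑ j, p j t') * Real.exp (-(C * X)) ≤ δ t' := by
    rw [← mul_le_mul_iff_of_pos_right hX0]
    calc (∑ j, p j t') * Real.exp (-(C * X)) * X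
        = (∑ j, p j t') * X * Real.exp (-(C * X)) := by ring
      _ ≤ δ t' * X := h1
  have h3 : b * δ t' * Real.exp (-(C * X)) ≤ δ t' :=
    le_trans (mul_le_mul_of_nonneg_right hlo hexpneg.le) h2
  have h3' : b * Real.exp (-(C * X)) ≤ 1 := by
    rw [← mul_le_mul_iff_of_pos_right hδ, one_mul]
    calc b * Real.exp (-(C * X)) * δ t' = b * δ t' * Real.exp (-(C * X)) := by ring
      _ ≤ δ t' := h3
  have hinv : Real.exp (-(C * X)) * Real.exp (C * X) = 1 := by
    rw [← Real.exp_add]; simp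
  have h4 : b ≤ Real.exp (C * X) := by
    have hE : (0:ℝ) < Real.exp (C * X) := Real.exp_pos _
    calc b = b * (Real.exp (-(C * X)) * Real.exp (C * X)) := by rw [hinv, mul_one]
      _ = (b * Real.exp (-(C * X))) * Real.exp (C * X) := by ring
      _ ≤ 1 * Real.exp (C * X) := mul_le_mul_of_nonneg_right h3' hE.le
      _ = Real.exp (C * X) := one_mul _
  have h5 : Real.log b ≤ C * X := by
    have := Real.log_le_log (by linarith : (0:ℝ) < b) h4
    rwa [Real.log_exp] at this
  have h6 : Real.log b / C ≤ X := (div_le_iff₀ hC0).mpr (by linarith)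
  exact absurd (le_trans h6 hxt') (not_le.mpr hlamlog)


lemma term_bound {P A X Y Xd Yd c C l L Rε θ : ℝ}
    (hP : 0 < P) (hc : 0 < c) (hA1 : c ≤ A) (hA2 : A ≤ C)
    (hl : 0 < l) (hYl : l ≤ Y) (hYL : Y ≤ L)
    (hXdl : 0 ≤ Xd) (hYdl : l ≤ Yd)
    (hXd : Xd ≤ Rε * Yd) (hθ1 : 1 < θ) (hXθ : θ * Y ≤ X) (hRε : 0 < Rε)
    (hHθ : Rε * Real.exp (-(c * l * (θ - 1))) - θ ≤ 0) :
    P * Xd * Real.exp (-(A * X)) * Y - X * (P * Yd * Real.exp (-(A * Y))) ≤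
      l * Real.exp (-(C * L)) / L * (Rε * Real.exp (-(c * l * (θ - 1))) - θ) * Y ^ 2 * P := by
  have hY0 : 0 < Y := lt_of_lt_of_le hl hYl
  have hL0 : 0 < L := lt_of_lt_of_le hY0 hYL
  have hX0 : 0 < X := lt_of_lt_of_le (by nlinarith) hXθ
  have hYd0 : 0 < Yd := lt_of_lt_of_le hl hYdl
  have hEY : (0:ℝ) < Real.exp (-(A * Y)) := Real.exp_pos _
  have hECL : (0:ℝ) < Real.exp (-(C * L)) := Real.exp_pos _
  set E : ℝ := Real.exp (-(c * l * (θ - 1))) with hEdef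
  have hE0 : 0 < E := Real.exp_pos _
  have f2 : Real.exp (-(A * X)) = Real.exp (-(A * Y)) * Real.exp (-(A * (X - Y))) := by
    rw [← Real.exp_add]; ring_nf
  have hXY : l * (θ - 1) ≤ X - Y := by nlinarith
  have f3 : Real.exp (-(A * (X - Y))) ≤ E := by
    rw [hEdef]
    apply Real.exp_le_exp.mpr
    have h1 : c * (l * (θ - 1)) ≤ c * (X - Y) := by nlinarith
    have hXYpos : (0:ℝ) ≤ X - Y := le_trans (by nlinarith : (0:ℝ) ≤ l * (θ - 1)) hXY
    have h2 : c * (X - Y) ≤ A * (X - Y) := mul_le_mul_of_nonneg_right hA1 hXYpos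
    nlinarith
  have hbr1 : Xd * Real.exp (-(A * X)) * Y ≤ Rε * Yd * (Real.exp (-(A * Y)) * E) * Y := by
    rw [f2]
    have s1 : Xd * (Real.exp (-(A * Y)) * Real.exp (-(A * (X - Y)))) ≤
        Rε * Yd * (Real.exp (-(A * Y)) * E) := by
      apply mul_le_mul hXd ?_ (by positivity) (by positivity)
      exact mul_le_mul_of_nonneg_left f3 hEY.le
    exact mul_le_mul_of_nonneg_right s1 hY0.le
  have hbr2 : Xd * Real.exp (-(A * X)) * Y - X * (Yd * Real.exp (-(A * Y))) ≤
      Yd * Real.exp (-(A * Y)) * Y * (Rε * E - θ) := by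
    have s2 : Rε * Yd * (Real.exp (-(A * Y)) * E) * Y - X * (Yd * Real.exp (-(A * Y))) ≤
        Rε * Yd * (Real.exp (-(A * Y)) * E) * Y - θ * Y * (Yd * Real.exp (-(A * Y))) := by
      have : θ * Y * (Yd * Real.exp (-(A * Y))) ≤ X * (Yd * Real.exp (-(A * Y))) :=
        mul_le_mul_of_nonneg_right hXθ (by positivity)
      linarith
    have s3 : Rε * Yd * (Real.exp (-(A * Y)) * E) * Y - θ * Y * (Yd * Real.exp (-(A * Y))) =
        Yd * Real.exp (-(A * Y)) * Y * (Rε * E - θ) := by ring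
    linarith [hbr1, s2, s3.le, s3.ge]
  have hκ : l * Real.exp (-(C * L)) / L * Y ≤ Yd * Real.exp (-(A * Y)) := by
    have s4 : l * Real.exp (-(C * L)) / L * Y = l * Real.exp (-(C * L)) * (Y / L) := by ring
    have s5 : Y / L ≤ 1 := (div_le_one hL0).mpr hYL
    have s6 : l * Real.exp (-(C * L)) * (Y / L) ≤ l * Real.exp (-(C * L)) := by
      nlinarith [mul_pos hl hECL]
    have s7 : Real.exp (-(C * L)) ≤ Real.exp (-(A * Y)) := by
      apply Real.exp_le_exp.mpr
      have hA0' : 0 < A := lt_of_lt_of_le hc hA1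
      nlinarith
    have s8 : l * Real.exp (-(C * L)) ≤ Yd * Real.exp (-(A * Y)) :=
      mul_le_mul hYdl s7 hECL.le hYd0.le
    rw [s4]
    exact le_trans s6 s8
  have hbr3 : Yd * Real.exp (-(A * Y)) * Y * (Rε * E - θ) ≤
      l * Real.exp (-(C * L)) / L * Y ^ 2 * (Rε * E - θ) := by
    apply mul_le_mul_of_nonpos_right ?_ hHθ
    calc l * Real.exp (-(C * L)) / L * Y ^ 2
        = l * Real.exp (-(C * L)) / L * Y * Y := by ring
      _ ≤ Yd * Real.exp (-(A * Y)) * Y := mul_le_mul_of_nonneg_right hκ hY0.le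
  have hbr4 : Xd * Real.exp (-(A * X)) * Y - X * (Yd * Real.exp (-(A * Y))) ≤
      l * Real.exp (-(C * L)) / L * Y ^ 2 * (Rε * E - θ) := le_trans hbr2 hbr3
  calc P * Xd * Real.exp (-(A * X)) * Y - X * (P * Yd * Real.exp (-(A * Y)))
      = P * (Xd * Real.exp (-(A * X)) * Y - X * (Yd * Real.exp (-(A * Y)))) := by ring
    _ ≤ P * (l * Real.exp (-(C * L)) / L * Y ^ 2 * (Rε * E - θ)) :=
        mul_le_mul_of_nonneg_left hbr4 hP.le
    _ = l * Real.exp (-(C * L)) / L * (Rε * E - θ) * Y ^ 2 * P := by ring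


lemma key_limsup (hm : 0 < m) (hA0 : HypA0 m p a δ τd (fun _ _ => 0))
    (hτ : IsMaxDelay m τd (fun _ _ => 0) τ) (hA1 : HypA1 m p δ) (hA3 : HypA3 δ)
    {x y : ℝ → ℝ} (hx : IsPosSol m p a δ τd (fun _ _ => 0) τ x)
    (hy : IsPosSol m p a δ τd (fun _ _ => 0) τ y) :
    Filter.limsup (fun t => x t / y t) Filter.atTop ≤ 1 := by
  obtain ⟨c, C, hc0, hC0, hab⟩ := a_bounds hm hA0
  obtain ⟨b, C', Tb, hb1, hC'0, hTb1, hbd⟩ := ratio_bounds hm hA0 hA1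
  have hτ0 : 0 ≤ τ := tau_nonneg hm hτ
  obtain ⟨Kx, hKx⟩ := sol_upper hm hA0 hτ hA1 hx
  obtain ⟨Ky, hKy⟩ := sol_upper hm hA0 hτ hA1 hy
  obtain ⟨εx, Tx, hεx, hTx, hlx⟩ := sol_lower hm hA0 hτ hA1 hx
  obtain ⟨εy, Ty, hεy, hTy, hly⟩ := sol_lower hm hA0 hτ hA1 hy
  set l : ℝ := min εx εy with hldef
  set L : ℝ := max Kx Ky with hLdef
  set T₀ : ℝ := max Tx Ty with hT₀def
  have hl0 : 0 < l := lt_min hεx hεy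
  have hT₀1 : 1 ≤ T₀ := le_trans hTx (le_max_left _ _)
  have hbx : ∀ t, T₀ ≤ t → l ≤ x t ∧ x t ≤ L := by
    intro t ht
    refine ⟨le_trans (min_le_left _ _) (hlx t (le_trans (le_max_left _ _) ht)), ?_⟩
    exact le_trans (hKx t (by linarith)) (le_max_left _ _)
  have hby : ∀ t, T₀ ≤ t → l ≤ y t ∧ y t ≤ L := by
    intro t ht
    refine ⟨le_trans (min_le_right _ _) (hly t (le_trans (le_max_right _ _) ht)), ?_⟩
    exact le_trans (hKy t (by linarith)) (le_max_right _ _)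
  have hlL : l ≤ L := le_trans (hbx T₀ le_rfl).1 (hbx T₀ le_rfl).2
  have hL0 : 0 < L := lt_of_lt_of_le hl0 hlL
  have hxpos : ∀ t, 0 ≤ t → 0 < x t := sol_pos hm hA0 hτ hx
  have hypos : ∀ t, 0 ≤ t → 0 < y t := sol_pos hm hA0 hτ hy
  set r : ℝ → ℝ := fun t => x t / y t with hrdef
  have hrub : ∀ᶠ t in atTop, r t ≤ L / l := by
    filter_upwards [eventually_ge_atTop T₀] with t ht
    exact div_le_div₀ hL0.le (hbx t ht).2 hl0 (hby t ht).1
  have hrlb : ∀ᶠ t in atTop, l / L ≤ r t := by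
    filter_upwards [eventually_ge_atTop T₀] with t ht
    exact div_le_div₀ (hxpos t (by linarith)).le (hbx t ht).1 (hypos t (by linarith)) (hby t ht).2
  have hbddle : Filter.IsBoundedUnder (· ≤ ·) Filter.atTop r :=
    ⟨L / l, by rwa [Filter.eventually_map]⟩
  have hbddge : Filter.IsBoundedUnder (· ≥ ·) Filter.atTop r :=
    ⟨l / L, by rwa [Filter.eventually_map]⟩
  by_contra hcon
  push_neg at hcon
  set R := Filter.limsup r Filter.atTop with hRdef
  have hR1 : 1 < R := hcon
  set q : ℝ := c * l * (R - 1) with hqdef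
  have hq0 : 0 < q := by
    have : 0 < R - 1 := by linarith
    positivity
  have hexpq : 1 < Real.exp q := by
    have := Real.add_one_le_exp q
    linarith
  set ε : ℝ := R * (Real.exp q - 1) / 2 with hεdef
  have hε0 : 0 < ε := by
    have : 0 < R := by linarith
    have : 0 < Real.exp q - 1 := by linarith
    rw [hεdef]; positivity
  have hkey : (R + ε) * Real.exp (-q) < R := by
    have hEq : 0 < Real.exp q := Real.exp_pos q
    rw [Real.exp_neg q, mul_inv_lt_iff₀ hEq]
    have hR0 : 0 < R := by linarith
    have h2 : 0 < R * (Real.exp q - 1) := mul_pos hR0 (by linarith)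
    linarith
  have hfR : (R + ε) * Real.exp (-(c * l * (R - 1))) - R < 0 := by
    rw [← hqdef]; linarith
  have hcontf : ContinuousAt (fun u : ℝ => (R + ε) * Real.exp (-(c * l * (u - 1))) - u) R := by
    have : Continuous (fun u : ℝ => (R + ε) * Real.exp (-(c * l * (u - 1))) - u) :=
      (continuous_const.mul (Real.continuous_exp.comp
        ((continuous_const.mul (continuous_id.sub continuous_const)).neg))).sub continuous_id
    exact this.continuousAt
  have hev0 : ∀ᶠ u in 𝓝 R, (R + ε) * Real.exp (-(c * l * (u - 1))) - u < 0 :=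
    hcontf.eventually (eventually_lt_nhds hfR)
  have hev1 : ∀ᶠ u in 𝓝 R, (1 + R) / 2 < u := eventually_gt_nhds (by linarith)
  obtain ⟨θ, ⟨hθneg, hθhalf⟩, hθR⟩ :=
    ((((hev0.and hev1).filter_mono (nhdsWithin_le_nhds (s := Iio R))).and
      self_mem_nhdsWithin).exists)
  have hθ1 : 1 < θ := by linarith
  have hθR' : θ < R := hθR
  set Hθ : ℝ := (R + ε) * Real.exp (-(c * l * (θ - 1))) - θ with hHθdef
  have hHθneg : Hθ < 0 := hθneg
  set κ : ℝ := l * Real.exp (-(C * L)) / L with hκdef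
  have hκ0 : 0 < κ := by positivity
  set γ : ℝ := κ * b with hγdef
  have hγ0 : 0 < γ := by positivity
  have hγHθ : γ * Hθ < 0 := mul_neg_of_pos_of_neg hγ0 hHθneg
  have hRRε : R < R + ε := by linarith
  have hevr := Filter.eventually_lt_of_limsup_lt hRRε hbddle
  rw [Filter.eventually_atTop] at hevr
  obtain ⟨Tr, hTr⟩ := hevr
  set T : ℝ := max (max T₀ Tb) Tr + τ + 1 with hTdef
  have hMT₀ : T₀ ≤ max (max T₀ Tb) Tr := le_trans (le_max_left _ _) (le_max_left _ _)
  have hMTb : Tb ≤ max (max T₀ Tb) Tr := le_trans (le_max_right _ _) (le_max_left _ _)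
  have hMTr : Tr ≤ max (max T₀ Tb) Tr := le_max_right _ _
  have hT2 : 2 ≤ T := by rw [hTdef]; linarith
  have hT0 : (0:ℝ) < T := by linarith
  -- the derivative of r
  have hderiv : ∀ t : ℝ, 0 < t → HasDerivAt r
      ((((∑ j, p j t * x (t - τd j t) * Real.exp (-(a j t * x t))) - δ t * x t) * y t -
        x t * ((∑ j, p j t * y (t - τd j t) * Real.exp (-(a j t * y t))) - δ t * y t)) /
          y t ^ 2) t := by
    intro t ht
    exact (sol_hasDerivAt hx ht).div (sol_hasDerivAt hy ht) (hypos t ht.le).ne'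
  -- the pointwise derivative estimate
  have hDbound : ∀ t : ℝ, T ≤ t → θ ≤ r t →
      (((∑ j, p j t * x (t - τd j t) * Real.exp (-(a j t * x t))) - δ t * x t) * y t -
        x t * ((∑ j, p j t * y (t - τd j t) * Real.exp (-(a j t * y t))) - δ t * y t)) /
          y t ^ 2 ≤ γ * Hθ * δ t := by
    intro t ht hrt
    have ht0 : (0:ℝ) < t := by linarith
    have hX := hbx t (by linarith)
    have hY := hby t (by linarith)
    have hY0 : 0 < y t := hypos t ht0.le
    have hδt : 0 < δ t := hA0.2.2.1.2 t ht0.le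
    have hplo : b * δ t ≤ ∑ j, p j t := (hbd t (by linarith)).1
    have hXθ : θ * y t ≤ x t := by
      rw [hrdef] at hrt
      exact (le_div_iff₀ hY0).mp hrt
    have hperterm : ∀ j : Fin m,
        p j t * x (t - τd j t) * Real.exp (-(a j t * x t)) * y t -
          x t * (p j t * y (t - τd j t) * Real.exp (-(a j t * y t))) ≤
          κ * Hθ * y t ^ 2 * p j t := by
      intro j
      have hτj : τd j t ≤ τ := taud_le hτ j ht0.le
      have hτj0 : 0 ≤ τd j t := ((hA0.2.2.2 j).2.2.1 t ht0.le).1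
      have hu0 : T₀ ≤ t - τd j t := by rw [hTdef] at ht; linarith
      have hur : t - τd j t ≥ Tr := by rw [hTdef] at ht; linarith
      have hYd := hby _ hu0
      have hYd0 : 0 < y (t - τd j t) := lt_of_lt_of_le hl0 hYd.1
      have hXd0 : 0 ≤ x (t - τd j t) := (hxpos _ (by linarith)).le
      have hXdle : x (t - τd j t) ≤ (R + ε) * y (t - τd j t) := by
        have := hTr _ hur
        rw [hrdef] at this
        exact le_of_lt ((div_lt_iff₀ hYd0).mp this)
      rw [hκdef, hHθdef]
      exact term_bound ((hA0.1 j).2 t ht0.le) hc0 (hab j t ht0.le).1 (hab j t ht0.le).2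
        hl0 hY.1 hY.2 hXd0 hYd.1 hXdle hθ1 hXθ (by linarith)
        (by linarith)
    have hnum : (∑ j, p j t * x (t - τd j t) * Real.exp (-(a j t * x t))) * y t -
        x t * (∑ j, p j t * y (t - τd j t) * Real.exp (-(a j t * y t))) ≤
        κ * Hθ * y t ^ 2 * (∑ j, p j t) := by
      rw [Finset.sum_mul, Finset.mul_sum, ← Finset.sum_sub_distrib, Finset.mul_sum]
      exact Finset.sum_le_sum fun j _ => hperterm j
    have hmono : κ * Hθ * y t ^ 2 * (∑ j, p j t) ≤ κ * Hθ * y t ^ 2 * (b * δ t) := by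
      have hcoef : κ * Hθ * y t ^ 2 < 0 :=
        mul_neg_of_neg_of_pos (mul_neg_of_pos_of_neg hκ0 hHθneg) (pow_pos hY0 2)
      exact mul_le_mul_of_nonpos_left hplo hcoef.le
    rw [div_le_iff₀ (pow_pos hY0 2)]
    have heq : (((∑ j, p j t * x (t - τd j t) * Real.exp (-(a j t * x t))) - δ t * x t) * y t -
        x t * ((∑ j, p j t * y (t - τd j t) * Real.exp (-(a j t * y t))) - δ t * y t)) =
        (∑ j, p j t * x (t - τd j t) * Real.exp (-(a j t * x t))) * y t -
          x t * (∑ j, p j t * y (t - τd j t) * Real.exp (-(a j t * y t))) := by ring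
    rw [heq]
    have hfin : κ * Hθ * y t ^ 2 * (b * δ t) = γ * Hθ * δ t * y t ^ 2 := by
      rw [hγdef]; ring
    linarith
  -- continuity of r on [0, ∞)
  have hsub0 : Ici (0:ℝ) ⊆ Ici (-τ) := Ici_subset_Ici.mpr (by linarith)
  have hrc : ContinuousOn r (Ici (0:ℝ)) :=
    (hx.1.mono hsub0).div (hy.1.mono hsub0) (fun t ht => (hypos t ht).ne')
  -- the integral of δ
  set Eδ : ℝ → ℝ := fun u => ∫ s in (0:ℝ)..u, δ s with hEδdef
  have hEd : ∀ t : ℝ, 0 < t → HasDerivAt Eδ (δ t) t := fun t ht => ftc δ hA0.2.2.1.1 ht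
  by_cases hS : ∃ t₀, T ≤ t₀ ∧ r t₀ < θ
  · -- Case 2: r drops below θ and stays there, contradicting limsup = R > θ
    obtain ⟨t₀, ht₀T, ht₀θ⟩ := hS
    have hstay : ∀ t, t₀ ≤ t → r t ≤ θ := by
      intro t₂ ht₂
      by_contra hbad
      push_neg at hbad
      set V : Set ℝ := Icc t₀ t₂ ∩ r ⁻¹' (Iic θ) with hVdef
      have hVclosed : IsClosed V := by
        apply (hrc.mono ?_).preimage_isClosed_of_isClosed isClosed_Icc isClosed_Iic
        intro v hv
        have := hv.1
        simp only [mem_Ici]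
        linarith
      have hVne : V.Nonempty := ⟨t₀, ⟨le_rfl, ht₂⟩, ht₀θ.le⟩
      have hVbdd : BddAbove V := ⟨t₂, fun v hv => hv.1.2⟩
      set t₁ := sSup V with ht₁def
      have ht₁V : t₁ ∈ V := hVclosed.csSup_mem hVne hVbdd
      have ht₁0 : t₀ ≤ t₁ := ht₁V.1.1
      have ht₁2 : t₁ ≤ t₂ := ht₁V.1.2
      have hrt₁ : r t₁ ≤ θ := ht₁V.2
      have ht₁lt : t₁ < t₂ :=
        lt_of_le_of_ne ht₁2 (fun h => by rw [h] at hrt₁; linarith)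
      have hmid : ∀ s, t₁ < s → s ≤ t₂ → θ < r s := by
        intro s hs1 hs2
        by_contra hb
        push_neg at hb
        have : s ∈ V := ⟨⟨by linarith, hs2⟩, hb⟩
        exact absurd (le_csSup hVbdd this) (not_le.mpr hs1)
      have hant : AntitoneOn r (Icc t₁ t₂) := by
        apply antitoneOn_of_deriv_nonpos (convex_Icc _ _)
        · apply hrc.mono
          intro v hv
          have := hv.1
          simp only [mem_Ici]
          linarith
        · rw [interior_Icc]
          intro s hs
          have hs0 : (0:ℝ) < s := by have := hs.1; linarith
          exact ((hderiv s hs0).differentiableAt).differentiableWithinAt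
        · rw [interior_Icc]
          intro s hs
          have hs0 : (0:ℝ) < s := by have := hs.1; linarith
          rw [(hderiv s hs0).deriv]
          have hsT : T ≤ s := by have := hs.1; linarith
          have hge := (hmid s hs.1 hs.2.le).le
          have hDb := hDbound s hsT hge
          have hδs : 0 < δ s := hA0.2.2.1.2 s (by linarith)
          have hnp : γ * Hθ * δ s ≤ 0 :=
            mul_nonpos_of_nonpos_of_nonneg hγHθ.le hδs.le
          exact le_trans hDb hnp
      have : r t₂ ≤ r t₁ := hant ⟨le_rfl, ht₁2⟩ ⟨ht₁2, le_rfl⟩ ht₁2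
      linarith
    have hein : ∀ᶠ t in atTop, r t ≤ θ := by
      rw [Filter.eventually_atTop]; exact ⟨t₀, hstay⟩
    have : R ≤ θ := Filter.limsup_le_of_le hbddge.isCoboundedUnder_le hein
    linarith
  · -- Case 1: r stays above θ forever, contradicting ∫ δ = ∞
    push_neg at hS
    set φ : ℝ → ℝ := fun u => r u - γ * Hθ * Eδ u with hφdef
    have hφd : ∀ u : ℝ, T < u → HasDerivAt φ
        (((((∑ j, p j u * x (u - τd j u) * Real.exp (-(a j u * x u))) - δ u * x u) * y u -
          x u * ((∑ j, p j u * y (u - τd j u) * Real.exp (-(a j u * y u))) - δ u * y u)) /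
            y u ^ 2) - γ * Hθ * δ u) u := by
      intro u hu
      have h0u : (0:ℝ) < u := by linarith
      exact (hderiv u h0u).sub ((hEd u h0u).const_mul (γ * Hθ))
    have hEc : ContinuousOn Eδ (Ici T) := fun u hu =>
      ((hEd u (lt_of_lt_of_le hT0 hu)).continuousAt).continuousWithinAt
    have hφant : AntitoneOn φ (Ici T) := by
      apply antitoneOn_of_deriv_nonpos (convex_Ici T)
      · exact ((hrc.mono (Ici_subset_Ici.mpr hT0.le)).sub (continuousOn_const.mul hEc))
      · rw [interior_Ici]
        intro u hu
        exact ((hφd u hu).differentiableAt).differentiableWithinAt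
      · rw [interior_Ici]
        intro u hu
        rw [(hφd u hu).deriv]
        have hDb := hDbound u (le_of_lt hu) (hS u (le_of_lt hu))
        linarith
    have htend : Filter.Tendsto Eδ Filter.atTop Filter.atTop := hA3
    have hbig : ∀ᶠ u in atTop, Eδ T + (r T + 1) / (-(γ * Hθ)) ≤ Eδ u :=
      htend.eventually_ge_atTop _
    obtain ⟨u, hu1, hu2⟩ := (hbig.and (eventually_ge_atTop T)).exists
    have hφle : φ u ≤ φ T := hφant (mem_Ici.mpr le_rfl) (mem_Ici.mpr hu2) hu2
    have h5 : γ * Hθ * (Eδ u - Eδ T) ≤ -(r T + 1) := by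
      have h6 : (r T + 1) / (-(γ * Hθ)) ≤ Eδ u - Eδ T := by linarith
      rw [div_le_iff₀ (by linarith : (0:ℝ) < -(γ * Hθ))] at h6
      linarith
    have hru : r u ≤ -1 := by
      simp only [hφdef] at hφle
      linarith
    have hrupos : 0 < r u := by
      rw [hrdef]
      exact div_pos (hxpos u (by linarith)) (hypos u (by linarith))
    linarith


end Nich

/-- For equation (*) with all delays `σ_j ≡ 0`, i.e.
`x'(t) = ∑ j, p j t * x(t - τ_j(t)) e^{-a_j(t) x(t)} - δ(t) x(t)`, under (A0)--(A3)
every positive solution is a global attractor. -/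
theorem global_attractivity_no_sigma_delays
    (m : ℕ) (hm : 0 < m) (p a : Fin m → ℝ → ℝ) (δ : ℝ → ℝ)
    (τd : Fin m → ℝ → ℝ) (τ : ℝ)
    (hA0 : HypA0 m p a δ τd (fun _ _ => 0))
    (hτ : IsMaxDelay m τd (fun _ _ => 0) τ)
    (hA1 : HypA1 m p δ) (hA2 : HypA2 m p τ) (hA3 : HypA3 δ) :
    ∀ x₁ x₂ : ℝ → ℝ,
      IsPosSol m p a δ τd (fun _ _ => 0) τ x₁ →
      IsPosSol m p a δ τd (fun _ _ => 0) τ x₂ →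
      Filter.Tendsto (fun t => x₁ t - x₂ t) Filter.atTop (nhds 0) := by
  intro x₁ x₂ hx₁ hx₂
  have h12 := Nich.key_limsup hm hA0 hτ hA1 hA3 hx₁ hx₂
  have h21 := Nich.key_limsup hm hA0 hτ hA1 hA3 hx₂ hx₁
  obtain ⟨K₁, hK₁⟩ := Nich.sol_upper hm hA0 hτ hA1 hx₁
  obtain ⟨K₂, hK₂⟩ := Nich.sol_upper hm hA0 hτ hA1 hx₂
  obtain ⟨ε₁, T₁, hε₁, hT₁, hl₁⟩ := Nich.sol_lower hm hA0 hτ hA1 hx₁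
  obtain ⟨ε₂, T₂, hε₂, hT₂, hl₂⟩ := Nich.sol_lower hm hA0 hτ hA1 hx₂
  have hτ0 : 0 ≤ τ := Nich.tau_nonneg hm hτ
  have hpos₁ := Nich.sol_pos hm hA0 hτ hx₁
  have hpos₂ := Nich.sol_pos hm hA0 hτ hx₂
  have hK₁0 : 0 < K₁ := lt_of_lt_of_le (hpos₁ 0 le_rfl) (hK₁ 0 (by linarith))
  have hK₂0 : 0 < K₂ := lt_of_lt_of_le (hpos₂ 0 le_rfl) (hK₂ 0 (by linarith))
  set M : ℝ := max K₁ K₂ + 1 with hMdef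
  have hM0 : 0 < M := by
    have := le_max_left K₁ K₂
    rw [hMdef]; linarith
  have hK₁M : K₁ < M := by have := le_max_left K₁ K₂; rw [hMdef]; linarith
  have hK₂M : K₂ < M := by have := le_max_right K₁ K₂; rw [hMdef]; linarith
  rw [NormedAddCommGroup.tendsto_nhds_zero]
  intro ε hε
  have hεM : 0 < ε / M := div_pos hε hM0
  have hb12 : Filter.IsBoundedUnder (· ≤ ·) Filter.atTop (fun t => x₁ t / x₂ t) := by
    refine ⟨K₁ / ε₂, ?_⟩
    rw [Filter.eventually_map]
    filter_upwards [eventually_ge_atTop (max T₁ T₂)] with t ht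
    exact div_le_div₀ hK₁0.le (hK₁ t (by have := le_trans (le_max_left T₁ T₂) ht; linarith))
      hε₂ (hl₂ t (le_trans (le_max_right T₁ T₂) ht))
  have hb21 : Filter.IsBoundedUnder (· ≤ ·) Filter.atTop (fun t => x₂ t / x₁ t) := by
    refine ⟨K₂ / ε₁, ?_⟩
    rw [Filter.eventually_map]
    filter_upwards [eventually_ge_atTop (max T₁ T₂)] with t ht
    exact div_le_div₀ hK₂0.le (hK₂ t (by have := le_trans (le_max_right T₁ T₂) ht; linarith))
      hε₁ (hl₁ t (le_trans (le_max_left T₁ T₂) ht))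
  have h1ev : ∀ᶠ t in Filter.atTop, x₁ t / x₂ t < 1 + ε / M :=
    Filter.eventually_lt_of_limsup_lt (lt_of_le_of_lt h12 (by linarith)) hb12
  have h2ev : ∀ᶠ t in Filter.atTop, x₂ t / x₁ t < 1 + ε / M :=
    Filter.eventually_lt_of_limsup_lt (lt_of_le_of_lt h21 (by linarith)) hb21
  filter_upwards [h1ev, h2ev, eventually_ge_atTop (max (max T₁ T₂) 1)] with t h1 h2 ht
  have ht1 : (1:ℝ) ≤ t := le_trans (le_max_right _ _) ht
  have hx₂pos : 0 < x₂ t := hpos₂ t (by linarith)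
  have hx₁pos : 0 < x₁ t := hpos₁ t (by linarith)
  have hx₁M : x₁ t ≤ M := le_trans (hK₁ t (by linarith)) hK₁M.le
  have hx₂M : x₂ t ≤ M := le_trans (hK₂ t (by linarith)) hK₂M.le
  have hcancel : ε / M * M = ε := div_mul_cancel₀ ε hM0.ne'
  rw [Real.norm_eq_abs, abs_sub_lt_iff]
  constructor
  · have h1' : x₁ t < (1 + ε / M) * x₂ t := (div_lt_iff₀ hx₂pos).mp h1
    have e1 : (1 + ε / M) * x₂ t = x₂ t + ε / M * x₂ t := by ring
    have e2 : ε / M * x₂ t ≤ ε / M * M := mul_le_mul_of_nonneg_left hx₂M hεM.le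
    linarith
  · have h2' : x₂ t < (1 + ε / M) * x₁ t := (div_lt_iff₀ hx₁pos).mp h2
    have e1 : (1 + ε / M) * x₁ t = x₁ t + ε / M * x₁ t := by ring
    have e2 : ε / M * x₁ t ≤ ε / M * M := mul_le_mul_of_nonneg_left hx₁M hεM.le
    linarith
end
end
end

section
/- Consider equation (*) under (A0) with all coefficient and delay functions δ, p_j, a_j, τ_j, σ_j ω-periodic (ω > 0), extended to all of ℝ, and set D = ∫_0^ω δ(t) dt, γ = max_{t∈[0,ω]} p(t)/δ(t). If x* : ℝ → (0,∞) is an ω-periodic solution of (*) in the cone 𝒦 = { y continuous, ω-periodic, nonnegative : y(t) ≥ e^{−D} max_s y(s) for all t }, with m* = min_t x*(t) and M* = max_t x*(t), then e^{a⁻ m*} ≤ γ and consequently M* ≤ (1/a⁻) e^{D} log γ. -/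
open Real Filter MeasureTheory Set

noncomputable section

/-- For an ω-periodic equation (*) considered on all of `ℝ`, with
`D = ∫_0^ω δ(t) dt` and `γ = max_{t∈[0,ω]} p(t)/δ(t)`, any positive ω-periodic solution `x*`
lying in the cone `𝒦 = {y : y(t) ≥ e^{-D} max_s y(s)}`, with `m* = min x*` and
`M* = max x*`, satisfies `e^{a⁻ m*} ≤ γ` and hence `M* ≤ (1/a⁻) e^D log γ`. -/
theorem periodic_solution_cone_bounds
    (m : ℕ) (hm : 0 < m) (p a : Fin m → ℝ → ℝ) (δ : ℝ → ℝ)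
    (τd σd : Fin m → ℝ → ℝ)
    -- (A0) on all of ℝ
    (hp : ∀ j, Continuous (p j) ∧ ∀ t : ℝ, 0 < p j t)
    (ha : ∀ j, Continuous (a j) ∧
      ∃ c C : ℝ, 0 < c ∧ ∀ t : ℝ, c ≤ a j t ∧ a j t ≤ C)
    (hδ : Continuous δ ∧ ∀ t : ℝ, 0 < δ t)
    (hdel : ∀ j, Continuous (τd j) ∧ Continuous (σd j) ∧
      (∀ t : ℝ, 0 ≤ τd j t ∧ 0 ≤ σd j t) ∧
      ∃ B : ℝ, ∀ t : ℝ, τd j t ≤ B ∧ σd j t ≤ B)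
    -- ω-periodicity of all coefficients and delays
    (ω : ℝ) (hω : 0 < ω)
    (hper : ∀ t : ℝ, δ (t + ω) = δ t ∧ ∀ j : Fin m,
      p j (t + ω) = p j t ∧ a j (t + ω) = a j t ∧
      τd j (t + ω) = τd j t ∧ σd j (t + ω) = σd j t)
    (aminus : ℝ)
    (haminus : IsGLB {r : ℝ | ∃ j : Fin m, ∃ t : ℝ, r = a j t} aminus)
    (D : ℝ) (hD : D = ∫ t in (0:ℝ)..ω, δ t)
    (γ : ℝ) (hγ : IsGreatest ((fun t => (∑ j, p j t) / δ t) '' Icc (0:ℝ) ω) γ)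
    -- x* : an ω-periodic positive solution of (*) on ℝ, lying in the cone 𝒦
    (xstar : ℝ → ℝ) (hxpos : ∀ t : ℝ, 0 < xstar t)
    (hxper : Function.Periodic xstar ω)
    (hxsol : ∀ t : ℝ, HasDerivAt xstar
      ((∑ j, p j t * xstar (t - τd j t) * Real.exp (-(a j t * xstar (t - σd j t))))
        - δ t * xstar t) t)
    (mstar Mstar : ℝ)
    (hmstar : IsLeast (Set.range xstar) mstar)
    (hMstar : IsGreatest (Set.range xstar) Mstar)
    (hcone : ∀ t : ℝ, Real.exp (-D) * Mstar ≤ xstar t) :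
    Real.exp (aminus * mstar) ≤ γ ∧ Mstar ≤ (1 / aminus) * Real.exp D * Real.log γ := by
  -- aminus is a positive lower bound of all a j
  have hamin_le : ∀ j t, aminus ≤ a j t := by
    intro j t
    exact haminus.1 ⟨j, t, rfl⟩
  have hamin_pos : 0 < aminus := by
    choose c C hc hcC using fun j => (ha j).2
    have hne : (Finset.univ : Finset (Fin m)).Nonempty := ⟨⟨0, hm⟩, Finset.mem_univ _⟩
    set cmin := Finset.univ.inf' hne c with hcmin
    have hlb : cmin ∈ lowerBounds {r : ℝ | ∃ j : Fin m, ∃ t : ℝ, r = a j t} := by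
      rintro r ⟨j, t, rfl⟩
      exact le_trans (Finset.inf'_le c (Finset.mem_univ j)) (hcC j t).1
    have h1 : cmin ≤ aminus := haminus.2 hlb
    have h2 : 0 < cmin := by
      rw [hcmin, Finset.lt_inf'_iff]
      intro j _; exact hc j
    linarith
  -- mstar and Mstar
  obtain ⟨tm, htm⟩ := hmstar.1
  have hmpos : 0 < mstar := htm ▸ hxpos tm
  have hmle : ∀ t, mstar ≤ xstar t := fun t => hmstar.2 ⟨t, rfl⟩
  have hMge : ∀ t, xstar t ≤ Mstar := fun t => hMstar.2 ⟨t, rfl⟩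
  have hMpos : 0 < Mstar := lt_of_lt_of_le hmpos (htm ▸ hMge tm)
  -- point of maximum in [0, ω]
  obtain ⟨t1, ht1⟩ := hMstar.1
  set t0 : ℝ := t1 - ⌊t1 / ω⌋ * ω with ht0def
  have hx0 : xstar t0 = Mstar := by
    rw [ht0def, hxper.sub_int_mul_eq, ht1]
  have ht0mem : t0 ∈ Icc (0:ℝ) ω := by
    constructor
    · have := Int.sub_floor_div_mul_nonneg t1 hω
      simpa [ht0def] using this
    · show t0 ≤ ω
      rw [ht0def]
      exact (Int.sub_floor_div_mul_lt t1 hω).le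
  -- derivative zero at the max
  have hmax : IsLocalMax xstar t0 := by
    apply Filter.Eventually.of_forall
    intro t
    rw [hx0]; exact hMge t
  have hderiv0 :
      (∑ j, p j t0 * xstar (t0 - τd j t0) * Real.exp (-(a j t0 * xstar (t0 - σd j t0))))
        - δ t0 * xstar t0 = 0 := hmax.hasDerivAt_eq_zero (hxsol t0)
  have heq : δ t0 * Mstar
      = ∑ j, p j t0 * xstar (t0 - τd j t0) * Real.exp (-(a j t0 * xstar (t0 - σd j t0))) := by
    rw [← hx0]; linarith
  -- bound each term
  have hterm : ∀ j : Fin m,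
      p j t0 * xstar (t0 - τd j t0) * Real.exp (-(a j t0 * xstar (t0 - σd j t0)))
        ≤ p j t0 * Mstar * Real.exp (-(aminus * mstar)) := by
    intro j
    have hpj := (hp j).2 t0
    have hexp : Real.exp (-(a j t0 * xstar (t0 - σd j t0))) ≤ Real.exp (-(aminus * mstar)) := by
      apply Real.exp_le_exp.2
      have h1 : aminus * mstar ≤ a j t0 * xstar (t0 - σd j t0) :=
        mul_le_mul (hamin_le j t0) (hmle _) hmpos.le
          (le_trans hamin_pos.le (hamin_le j t0))
      linarith
    calc p j t0 * xstar (t0 - τd j t0) * Real.exp (-(a j t0 * xstar (t0 - σd j t0)))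
        ≤ p j t0 * Mstar * Real.exp (-(a j t0 * xstar (t0 - σd j t0))) := by
          apply mul_le_mul_of_nonneg_right _ (Real.exp_pos _).le
          exact mul_le_mul_of_nonneg_left (hMge _) hpj.le
      _ ≤ p j t0 * Mstar * Real.exp (-(aminus * mstar)) := by
          apply mul_le_mul_of_nonneg_left hexp
          positivity
  have hsum : δ t0 * Mstar ≤ (∑ j, p j t0) * Mstar * Real.exp (-(aminus * mstar)) := by
    rw [heq]
    calc (∑ j, p j t0 * xstar (t0 - τd j t0) * Real.exp (-(a j t0 * xstar (t0 - σd j t0))))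
        ≤ ∑ j, p j t0 * Mstar * Real.exp (-(aminus * mstar)) :=
          Finset.sum_le_sum fun j _ => hterm j
      _ = (∑ j, p j t0) * Mstar * Real.exp (-(aminus * mstar)) := by
          rw [← Finset.sum_mul, ← Finset.sum_mul]
  -- deduce exp(aminus * mstar) ≤ p(t0)/δ(t0)
  have hδ0 := hδ.2 t0
  have hkey : Real.exp (aminus * mstar) ≤ (∑ j, p j t0) / δ t0 := by
    rw [le_div_iff₀ hδ0]
    have h1 : δ t0 ≤ (∑ j, p j t0) * Real.exp (-(aminus * mstar)) := by
      have := mul_le_mul_of_nonneg_right hsum (le_of_lt (inv_pos.2 hMpos))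
      calc δ t0 = δ t0 * Mstar * Mstar⁻¹ := by field_simp
        _ ≤ (∑ j, p j t0) * Mstar * Real.exp (-(aminus * mstar)) * Mstar⁻¹ := this
        _ = (∑ j, p j t0) * Real.exp (-(aminus * mstar)) := by field_simp
    have := mul_le_mul_of_nonneg_right h1 (Real.exp_pos (aminus * mstar)).le
    calc Real.exp (aminus * mstar) * δ t0 = δ t0 * Real.exp (aminus * mstar) := by ring
      _ ≤ (∑ j, p j t0) * Real.exp (-(aminus * mstar)) * Real.exp (aminus * mstar) := this
      _ = ∑ j, p j t0 := by
          rw [mul_assoc, ← Real.exp_add]; simp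
  have hγ1 : Real.exp (aminus * mstar) ≤ γ :=
    le_trans hkey (hγ.2 ⟨t0, ht0mem, rfl⟩)
  refine ⟨hγ1, ?_⟩
  -- second conclusion
  have hγpos : 0 < γ := lt_of_lt_of_le (Real.exp_pos _) hγ1
  have hlog : aminus * mstar ≤ Real.log γ := (Real.le_log_iff_exp_le hγpos).2 hγ1
  have hMm : Mstar ≤ Real.exp D * mstar := by
    have h := hcone tm
    rw [htm] at h
    have := mul_le_mul_of_nonneg_left h (Real.exp_pos D).le
    calc Mstar = Real.exp D * (Real.exp (-D) * Mstar) := by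
          rw [← mul_assoc, ← Real.exp_add]; simp
      _ ≤ Real.exp D * mstar := this
  calc Mstar ≤ Real.exp D * mstar := hMm
    _ ≤ Real.exp D * (Real.log γ / aminus) := by
        apply mul_le_mul_of_nonneg_left _ (Real.exp_pos D).le
        rw [le_div_iff₀ hamin_pos]
        linarith
    _ = (1 / aminus) * Real.exp D * Real.log γ := by ring
end
end
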